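/- arXiv:math/0611576 — 4 statements merged into one kernel-verified Lean document; each statement's English description precedes it below -/
import Mathlib

section
/- Let w be a finite word over an alphabet A and let x ∈ A be a letter that does not occur in w. Then Pal(w·x) = Pal(w)·x·Pal(w). -/
/-- The palindromic right closure `w⁽⁺⁾`: the shortest palindrome having `w` as a prefix. -/
def palClosure {A : Type*} [DecidableEq A] (w : List A) : List A :=
  w ++ (w.take (Nat.find (⟨w.length, by simp⟩ :
    ∃ i, (w.drop i).reverse = w.drop i))).reverse

/-- Iterated palindromic closure: `Pal ε = ε`, `Pal (w·x) = (Pal w · x)⁽⁺⁾`. -/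
def Pal {A : Type*} [DecidableEq A] (w : List A) : List A :=
  w.foldl (fun p x => palClosure (p ++ [x])) []

/-- `u` is a factor of the infinite word `s`. -/
def IsFactorOf {A : Type*} (u : List A) (s : ℕ → A) : Prop :=
  ∃ i : ℕ, u = (List.range u.length).map (fun j => s (i + j))

/-- `s` is balanced. -/
def IsBalanced {A : Type*} [DecidableEq A] (s : ℕ → A) : Prop :=
  ∀ u v : List A, IsFactorOf u s → IsFactorOf v s → u.length = v.length →
    ∀ a : A, u.count a ≤ v.count a + 1

/-- `u` is a prefix of the infinite word `s`. -/
def IsPrefixOf {A : Type*} (u : List A) (s : ℕ → A) : Prop :=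
  u = (List.range u.length).map s

/-- `s` is a standard episturmian sequence with directive sequence `Δ`. -/
def IsStdEpisturmian {A : Type*} [DecidableEq A] (s Δ : ℕ → A) : Prop :=
  ∀ n : ℕ, IsPrefixOf (Pal ((List.range n).map Δ)) s

/-- Concatenation of a finite word and an infinite word. -/
def wcat {A : Type*} (u : List A) (s : ℕ → A) : ℕ → A :=
  fun n => if h : n < u.length then u.get ⟨n, h⟩ else s (n - u.length)

/-- The constant infinite word `c^ω`. -/
def constW {A : Type*} (c : A) : ℕ → A := fun _ => c

/-- The purely periodic infinite word `w^ω` (`d` is a default letter, irrelevant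
when `w` is nonempty). -/
def perW {A : Type*} (w : List A) (d : A) : ℕ → A :=
  fun n => w.getD (n % w.length) d

/-- At least three distinct letters occur in `s`. -/
def ThreeLetters {A : Type*} (s : ℕ → A) : Prop :=
  ∃ a b c : A, a ≠ b ∧ a ≠ c ∧ b ≠ c ∧
    a ∈ Set.range s ∧ b ∈ Set.range s ∧ c ∈ Set.range s

/-! `Pal w` is a palindrome all of whose letters occur in `w`. When `x ∉ w`, the only palindromic
suffix of `Pal w ++ [x]` is `[x]`, since a longer one would begin with a letter of `Pal w` and end
with `x`; so the closure appends the reversal of `Pal w`, which is `Pal w` itself. -/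

lemma mem_of_reverse_append_singleton_eq {A : Type*} {u : List A} {x : A} (hu : u ≠ [])
    (h : (u ++ [x]).reverse = u ++ [x]) : x ∈ u := by
  rw [List.reverse_append, List.reverse_singleton, List.singleton_append] at h
  obtain ⟨a, t, rfl⟩ := List.exists_cons_of_ne_nil hu
  exact (List.cons.inj h).1 ▸ List.mem_cons_self

section PalindromicClosure

variable {A : Type*} [DecidableEq A]

lemma palClosure_eq_append_reverse_take {w : List A} {i : ℕ} (hi : (w.drop i).reverse = w.drop i)
    (hlt : ∀ j < i, (w.drop j).reverse ≠ w.drop j) :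
    palClosure w = w ++ (w.take i).reverse := by
  unfold palClosure
  rw [(Nat.find_eq_iff _).2 ⟨hi, hlt⟩]

lemma exists_palClosure_eq (w : List A) :
    ∃ i, (w.drop i).reverse = w.drop i ∧ palClosure w = w ++ (w.take i).reverse :=
  ⟨_, Nat.find_spec (p := fun i => (w.drop i).reverse = w.drop i) _, rfl⟩

lemma reverse_palClosure (w : List A) : (palClosure w).reverse = palClosure w := by
  obtain ⟨i, hsuffix, hclosure⟩ := exists_palClosure_eq w
  have hrev : w.reverse = w.drop i ++ (w.take i).reverse := by
    conv_lhs => rw [← List.take_append_drop i w]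
    rw [List.reverse_append, hsuffix]
  rw [hclosure, List.reverse_append, List.reverse_reverse, hrev, ← List.append_assoc,
    List.take_append_drop]

lemma palClosure_subset (w : List A) : palClosure w ⊆ w := by
  unfold palClosure
  exact List.append_subset.2 ⟨List.Subset.refl w,
    fun _ h => List.take_subset _ _ (List.mem_reverse.1 h)⟩

lemma pal_append_singleton (w : List A) (x : A) :
    Pal (w ++ [x]) = palClosure (Pal w ++ [x]) := by
  simp [Pal, List.foldl_append]

lemma reverse_pal (w : List A) : (Pal w).reverse = Pal w := by
  induction w using List.reverseRecOn with
  | nil => rfl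
  | append_singleton w x _ => rw [pal_append_singleton]; exact reverse_palClosure _

lemma pal_subset (w : List A) : Pal w ⊆ w := by
  induction w using List.reverseRecOn with
  | nil => exact List.Subset.refl _
  | append_singleton w x ih =>
    rw [pal_append_singleton]
    exact List.Subset.trans (palClosure_subset _) (List.append_subset.2
      ⟨List.subset_append_of_subset_left _ ih, List.subset_append_right _ _⟩)

lemma palClosure_append_singleton_of_not_mem {p : List A} {x : A}
    (hp : p.reverse = p) (hx : x ∉ p) : palClosure (p ++ [x]) = p ++ [x] ++ p := by
  rw [palClosure_eq_append_reverse_take (i := p.length) (by simp), List.take_left, hp]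
  intro j hj hpal
  rw [List.drop_append_of_le_length hj.le] at hpal
  have hne : p.drop j ≠ [] := by simpa [List.drop_eq_nil_iff] using hj
  exact hx (List.drop_subset _ _ (mem_of_reverse_append_singleton_eq hne hpal))

end PalindromicClosure

/-- Lemma (Justin): if `x` does not occur in `w` then `Pal(w·x) = Pal(w)·x·Pal(w)`. -/
theorem pal_append_of_not_mem {A : Type*} [DecidableEq A] (w : List A) (x : A)
    (hx : x ∉ w) :
    Pal (w ++ [x]) = Pal w ++ [x] ++ Pal w := by
  rw [pal_append_singleton]
  exact palClosure_append_singleton_of_not_mem (reverse_pal w) (fun h => hx (pal_subset w h))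
end

section
/- Let s be a balanced standard episturmian sequence over an alphabet A such that at least 3 distinct letters occur in s, with directive sequence Δ = x·α^ℓ·y, where x is a nonempty finite word, α is a letter, ℓ ≥ 2, y is an infinite word, and the letters of x·α are pairwise distinct (so that α is the first repeated letter of Δ). Then no letter occurring in x occurs in y. -/
namespace Aux
variable {A : Type*} [DecidableEq A]

lemma palin_getElem {l : List A} (hl : l.reverse = l) {i : ℕ} (h : i < l.length) :
    l[i] = l[l.length - 1 - i]'(by omega) := by
  have h2 : i < l.reverse.length := by simpa using h
  have := List.getElem_reverse h2
  rw [List.getElem_of_eq hl h2] at this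
  exact this.symm ▸ rfl

lemma palin_first_last {l : List A} (hl : l.reverse = l) (h : 0 < l.length) :
    l[0] = l[l.length - 1]'(by omega) := by
  have := palin_getElem hl h
  simpa using this

lemma palClosure_eq (q : List A) {j : ℕ} (hj : (q.drop j).reverse = q.drop j)
    (hmin : ∀ i < j, ¬ (q.drop i).reverse = q.drop i) :
    palClosure q = q ++ (q.take j).reverse := by
  unfold palClosure
  rw [(Nat.find_eq_iff _).2 ⟨hj, hmin⟩]

lemma palin_helper (q : List A) {j : ℕ} (hj : (q.drop j).reverse = q.drop j) :
    (q ++ (q.take j).reverse).reverse = q ++ (q.take j).reverse := by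
  set t := q.take j with ht
  set d := q.drop j with hd
  have htd : t ++ d = q := List.take_append_drop j q
  rw [← htd]
  simp only [List.reverse_append, List.reverse_reverse, hj, List.append_assoc]

lemma palClosure_prefix (q : List A) : q <+: palClosure q := ⟨_, rfl⟩

lemma palClosure_palin (q : List A) : (palClosure q).reverse = palClosure q := by
  unfold palClosure
  exact palin_helper q
    (Nat.find_spec (⟨q.length, by simp⟩ : ∃ i, (q.drop i).reverse = q.drop i))

lemma mem_palClosure {q : List A} {a : A} (h : a ∈ palClosure q) : a ∈ q := by
  unfold palClosure at h
  rcases List.mem_append.1 h with h | h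
  · exact h
  · exact List.mem_of_mem_take (List.mem_reverse.1 h)

lemma Pal_append (w v : List A) :
    Pal (w ++ v) = v.foldl (fun p x => palClosure (p ++ [x])) (Pal w) := by
  unfold Pal; rw [List.foldl_append]

lemma Pal_snoc (w : List A) (c : A) : Pal (w ++ [c]) = palClosure (Pal w ++ [c]) := by
  rw [Pal_append]; rfl

lemma Pal_prefix_foldl (p : List A) (v : List A) :
    p <+: v.foldl (fun p x => palClosure (p ++ [x])) p := by
  induction v generalizing p with
  | nil => exact List.prefix_refl p
  | cons c v ih =>
      simp only [List.foldl_cons]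
      exact List.IsPrefix.trans
        (List.IsPrefix.trans (List.prefix_append p [c]) (palClosure_prefix _)) (ih _)

lemma Pal_prefix (w v : List A) : Pal w <+: Pal (w ++ v) := by
  rw [Pal_append]; exact Pal_prefix_foldl _ _

lemma Pal_palin (w : List A) : (Pal w).reverse = Pal w := by
  induction w using List.reverseRecOn with
  | nil => rfl
  | append_singleton w c ih => rw [Pal_snoc]; exact palClosure_palin _

lemma mem_Pal {w : List A} {a : A} (h : a ∈ Pal w) : a ∈ w := by
  induction w using List.reverseRecOn with
  | nil => simpa [Pal] using h
  | append_singleton w c ih =>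
      rw [Pal_snoc] at h
      rcases List.mem_append.1 (mem_palClosure h) with h | h
      · exact List.mem_append_left _ (ih h)
      · exact List.mem_append_right _ h

lemma length_Pal (w : List A) : w.length ≤ (Pal w).length := by
  induction w using List.reverseRecOn with
  | nil => simp [Pal]
  | append_singleton w c ih =>
      have h1 := (Pal_prefix w [c]).length_le
      have h2 : (Pal w ++ [c]).length ≤ (Pal (w ++ [c])).length := by
        rw [Pal_snoc]; exact (palClosure_prefix _).length_le
      simp only [List.length_append, List.length_singleton] at *
      omega

lemma Pal_nil : Pal ([] : List A) = [] := rfl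

lemma Pal_singleton (c : A) : Pal [c] = [c] := by
  have h : Pal [c] = palClosure ([] ++ [c]) := rfl
  rw [h, palClosure_eq ([] ++ [c]) (j := 0) (by simp) (by omega)]
  simp

lemma Pal_new {w : List A} {c : A} (h : c ∉ w) (hw : w ≠ []) :
    Pal (w ++ [c]) = Pal w ++ c :: Pal w := by
  rw [Pal_snoc]
  have hcP : c ∉ Pal w := fun hc => h (mem_Pal hc)
  have hlen : 0 < (Pal w).length := by
    have h1 := length_Pal w
    have h2 : 0 < w.length := List.length_pos_iff.2 hw
    omega
  rw [palClosure_eq (Pal w ++ [c]) (j := (Pal w).length) (by simp) ?hmin]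
  case hmin =>
    intro i hi hpal
    replace hi : i < (Pal w).length := by omega
    have hdrop : ((Pal w ++ [c]).drop i) = (Pal w).drop i ++ [c] := by
      rw [List.drop_append_of_le_length (le_of_lt hi)]
    rw [hdrop] at hpal
    have hl0 : 0 < ((Pal w).drop i ++ [c]).length := by simp
    have hfl := palin_first_last hpal hl0
    have h1 : ((Pal w).drop i ++ [c])[0]'hl0 = (Pal w)[i] := by
      rw [List.getElem_append_left (by simp; omega)]
      simp
    have h2 : ((Pal w).drop i ++ [c])[(((Pal w).drop i ++ [c]).length - 1)]'(by omega) = c := by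
      simp
    rw [h1, h2] at hfl
    exact hcP (hfl ▸ List.getElem_mem _)
  · have : (Pal w ++ [c]).take (Pal w).length = Pal w := by
      simp
    rw [this, Pal_palin]
    simp


lemma palin_head?_getLast? {l : List A} (hl : l.reverse = l) : l.getLast? = l.head? := by
  rw [← List.head?_reverse, hl]

lemma Pal_head {w : List A} (hw : w ≠ []) :
    ∃ h : 0 < (Pal w).length, (Pal w)[0] = w[0]'(List.length_pos_iff.2 hw) := by
  have hx : w = [w[0]'(List.length_pos_iff.2 hw)] ++ w.drop 1 := by
    cases w with
    | nil => simp at hw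
    | cons a t => simp
  have hpre : Pal [w[0]'(List.length_pos_iff.2 hw)] <+: Pal w := by
    conv_rhs => rw [hx]
    exact Pal_prefix _ _
  rw [Pal_singleton] at hpre
  obtain ⟨t, ht⟩ := hpre
  have hlen : 0 < (Pal w).length := by rw [← ht]; simp
  refine ⟨hlen, ?_⟩
  have h0 : (0:ℕ) < ([w[0]'(List.length_pos_iff.2 hw)] ++ t).length := by simp
  have := List.getElem_of_eq ht h0
  rw [← this]
  simp

/-- Separation lemma: if `c` occurs in `c :: v` only at the start, then `Pal (c::v)`
has odd length and has `c` exactly at even positions. -/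
lemma separation {c : A} {v : List A} (hc : c ∉ v) :
    (Pal (c :: v)).length % 2 = 1 ∧
      ∀ i (h : i < (Pal (c :: v)).length), ((Pal (c :: v))[i] = c ↔ i % 2 = 0) := by
  induction v using List.reverseRecOn with
  | nil =>
      have h1 : Pal [c] = [c] := Pal_singleton c
      refine ⟨by rw [h1]; rfl, ?_⟩
      intro i h
      have : i = 0 := by rw [h1] at h; simpa using Nat.lt_one_iff.1 h
      subst this
      simp [h1]
  | append_singleton v d ih =>
      have hc' : c ∉ v := fun h => hc (List.mem_append_left _ h)
      have hdc : d ≠ c := fun h => hc (by simp [h])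
      obtain ⟨hodd, hiff⟩ := ih hc'
      have hsnoc : c :: (v ++ [d]) = (c :: v) ++ [d] := by simp
      rw [hsnoc, Pal_snoc]
      set W := Pal (c :: v) with hW
      set n := W.length with hn
      have hqlen : (W ++ [d]).length = n + 1 := by simp [hn]
      have hex : ∃ i, (((W ++ [d]).drop i)).reverse = (W ++ [d]).drop i := ⟨(W ++ [d]).length, by simp⟩
      have hpc : palClosure (W ++ [d]) = (W ++ [d]) ++ ((W ++ [d]).take (Nat.find hex)).reverse := rfl
      set j := Nat.find hex with hj
      have hjd : (((W ++ [d]).drop j)).reverse = (W ++ [d]).drop j := Nat.find_spec hex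
      have hj_le : j ≤ n := by
        apply Nat.find_le
        have h5 : (W ++ [d]).drop n = [d] := by
          rw [List.drop_append_of_le_length (by omega : n ≤ W.length)]
          simp [hn]
        rw [h5]; rfl
      have hqj_lt : j < (W ++ [d]).length := by omega
      have hqj : (W ++ [d])[j] = d := by
        have h1 : (((W ++ [d]).drop j)).head? = some ((W ++ [d])[j]) := by
          rw [List.head?_drop, List.getElem?_eq_getElem hqj_lt]
        have h2 : (((W ++ [d]).drop j)).getLast? = some d := by
          rw [List.drop_append_of_le_length (by omega : j ≤ W.length), List.getLast?_append]
          rfl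
        have h3 := palin_head?_getLast? hjd
        rw [h1, h2] at h3
        exact (Option.some_inj.1 h3).symm
      have hjodd : j % 2 = 1 := by
        rcases Nat.lt_or_ge j n with hlt | hge
        · have h6 : (W ++ [d])[j] = W[j]'(by omega) := List.getElem_append_left (by omega)
          rw [h6] at hqj
          have h7 := (hiff j (by omega))
          rw [hqj] at h7
          have h4 : ¬ (j % 2 = 0) := fun h => hdc (h7.2 h)
          omega
        · have : j = n := le_antisymm hj_le hge
          omega
      have htlen : ((W ++ [d]).take j).length = j := by
        rw [List.length_take]; omega
      have hRlen : ((W ++ [d]) ++ ((W ++ [d]).take j).reverse).length = n + 1 + j := by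
        rw [List.length_append, List.length_reverse, htlen, hqlen]
      rw [hpc]
      constructor
      · rw [hRlen]; omega
      · intro i hilen
        rw [hRlen] at hilen
        rcases Nat.lt_or_ge i (n + 1) with hlt | hge
        · have hiq : i < (W ++ [d]).length := by omega
          have h1 : ((W ++ [d]) ++ ((W ++ [d]).take j).reverse)[i]'(by rw [hRlen]; omega) = (W ++ [d])[i] :=
            List.getElem_append_left hiq
          rw [h1]
          rcases Nat.lt_or_ge i n with hlt2 | hge2
          · have h2 : (W ++ [d])[i] = W[i]'(by omega) := List.getElem_append_left (by omega)
            rw [h2]; exact hiff i (by omega)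
          · have hin : i = n := by omega
            have h2 : (W ++ [d])[i] = d := List.getElem_concat_length (by omega) _
            rw [h2]
            constructor
            · intro h; exact absurd h hdc
            · intro h; omega
        · set r := i - (n + 1) with hr
          have hrj : r < j := by omega
          have h1 : ((W ++ [d]) ++ ((W ++ [d]).take j).reverse)[i]'(by rw [hRlen]; omega)
              = ((W ++ [d]).take j).reverse[r]'(by rw [List.length_reverse, htlen]; omega) := by
            rw [List.getElem_append_right (by omega : (W ++ [d]).length ≤ i)]
            congr 1
            omega
          have h2 : ((W ++ [d]).take j).reverse[r]'(by rw [List.length_reverse, htlen]; omega)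
              = ((W ++ [d]).take j)[j - 1 - r]'(by rw [htlen]; omega) := by
            rw [List.getElem_reverse]
            congr 1
            rw [htlen]
          have h3 : ((W ++ [d]).take j)[j - 1 - r]'(by rw [htlen]; omega)
              = (W ++ [d])[j - 1 - r]'(by omega) := List.getElem_take
          have h4 : (W ++ [d])[j - 1 - r]'(by omega) = W[j - 1 - r]'(by omega) :=
            List.getElem_append_left (by omega)
          rw [h1, h2, h3, h4]
          rw [hiff (j - 1 - r) (by omega)]
          omega


lemma getElem_idx_congr (l : List A) {i j : ℕ} (h : i = j) (hi : i < l.length) :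
    l[i]'hi = l[j]'(h ▸ hi) := by subst h; rfl

/-- If `V` is a prefix of a palindrome `W`, then `V.reverse` is the corresponding suffix. -/
lemma drop_of_prefix_palin {V W : List A} (hpre : V <+: W) (hW : W.reverse = W) :
    W.drop (W.length - V.length) = V.reverse := by
  have h1 : (W.take V.length).reverse = W.reverse.drop (W.length - V.length) :=
    List.reverse_take
  rw [hW] at h1
  rw [← h1, ← List.prefix_iff_eq_take.1 hpre]

/-- `Pal(x·αα) = P α P α P` for a new letter `α`. -/
lemma Pal_two_alpha {x : List A} {α : A} (hα : α ∉ x) (hx : x ≠ []) :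
    Pal (x ++ [α, α]) = Pal x ++ α :: (Pal x ++ α :: Pal x) := by
  have h1 : x ++ [α, α] = (x ++ [α]) ++ [α] := by simp
  rw [h1, Pal_snoc, Pal_new hα hx]
  have hPpal := Pal_palin x
  have hαP : α ∉ Pal x := fun h => hα (mem_Pal h)
  have hple : 1 ≤ (Pal x).length := by
    have h2 := length_Pal x
    have h3 : 0 < x.length := List.length_pos_iff.2 hx
    omega
  set P := Pal x with hP
  set p := P.length with hp
  rw [palClosure_eq ((P ++ α :: P) ++ [α]) (j := p) ?hj ?hmin]
  case hj =>
    have h2 : ((P ++ α :: P) ++ [α]).drop p = (α :: P) ++ [α] := by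
      rw [List.drop_append_of_le_length (by simp; omega)]
      congr 1
      have : P ++ α :: P = P ++ (α :: P) := rfl
      rw [this, List.drop_left' rfl]
    rw [h2]
    have : (α :: P) ++ [α] = [α] ++ P ++ [α] := by simp
    rw [this]
    simp [List.reverse_append, hPpal]
  case hmin =>
    intro i hi hpal
    have hi2 : i < (P ++ α :: P).length := by simp; omega
    have h1 : (((P ++ α :: P) ++ [α]).drop i).head? = some (((P ++ α :: P) ++ [α])[i]'(by simp; omega)) := by
      rw [List.head?_drop, List.getElem?_eq_getElem (by simp; omega)]
    have h2 : (((P ++ α :: P) ++ [α]).drop i).getLast? = some α := by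
      rw [List.drop_append_of_le_length (by simp; omega), List.getLast?_append]
      rfl
    have h3 := palin_head?_getLast? hpal
    rw [h1, h2] at h3
    have h4 : ((P ++ α :: P) ++ [α])[i]'(by simp; omega) = P[i]'(by omega) := by
      rw [List.getElem_append_left hi2, List.getElem_append_left (by omega)]
    rw [h4] at h3
    exact hαP ((Option.some_inj.1 h3).symm ▸ List.getElem_mem _)
  · have h5 : ((P ++ α :: P) ++ [α]).take p = P := by
      rw [List.take_append_of_le_length (by simp; omega), List.take_append_of_le_length (by omega)]
      simp [hp]
    rw [h5, hPpal]
    simp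

/-- Return of the first letter: `Pal(w·c) = Pal(w)·c·(Pal w).drop 1` when `w = c::v`, `c ∉ v`. -/
lemma Pal_return {c : A} {v : List A} (hc : c ∉ v) :
    Pal ((c :: v) ++ [c]) = Pal (c :: v) ++ c :: (Pal (c :: v)).drop 1 := by
  obtain ⟨hodd, hiff⟩ := separation hc
  have hWpal : (Pal (c :: v)).reverse = Pal (c :: v) := Pal_palin _
  set W := Pal (c :: v) with hW
  set n := W.length with hn
  have hn1 : 1 ≤ n := by
    have h0 := length_Pal (c :: v)
    simp only [List.length_cons] at h0
    omega
  rw [Pal_snoc]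
  have hlast : W[n-1]'(by omega) = c := (hiff (n-1) (by omega)).2 (by omega)
  rw [palClosure_eq (W ++ [c]) (j := n - 1) ?hj ?hmin]
  case hj =>
    have h5 : (W ++ [c]).drop (n-1) = [c, c] := by
      rw [List.drop_append_of_le_length (by omega)]
      have h6 : W.drop (n-1) = [W[n-1]'(by omega)] := by
        rw [List.drop_eq_getElem_cons (by omega)]
        have : W.drop (n-1+1) = [] := by
          rw [List.drop_eq_nil_iff]; omega
        rw [this]
      rw [h6, hlast]
      rfl
    rw [h5]; rfl
  case hmin =>
    intro i hi hpal
    have hiW : i < n := by omega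
    have hiq : i < (W ++ [c]).length := by simp; omega
    -- W[i] = c hence i is even
    have h1 : ((W ++ [c]).drop i).head? = some ((W ++ [c])[i]'hiq) := by
      rw [List.head?_drop, List.getElem?_eq_getElem hiq]
    have h2 : ((W ++ [c]).drop i).getLast? = some c := by
      rw [List.drop_append_of_le_length (by omega), List.getLast?_append]
      rfl
    have h3 := palin_head?_getLast? hpal
    rw [h1, h2] at h3
    have h4 : (W ++ [c])[i]'hiq = W[i]'hiW := List.getElem_append_left hiW
    have hWic : W[i]'hiW = c := by rw [← h4]; exact (Option.some_inj.1 h3).symm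
    have hieven : i % 2 = 0 := (hiff i hiW).1 hWic
    -- center of the even-length palindromic suffix
    have hσlen : ((W ++ [c]).drop i).length = n + 1 - i := by simp [hn]
    set L := n + 1 - i with hL
    set t := L / 2 with ht
    have hLeven : L % 2 = 0 := by omega
    have hLge : 4 ≤ L := by omega
    have h2t : 2 * t = L := by omega
    have hcent := palin_getElem hpal (i := t - 1) (h := by rw [hσlen]; omega)
    have hidx : ((W ++ [c]).drop i).length - 1 - (t - 1) = t := by rw [hσlen]; omega
    rw [getElem_idx_congr _ hidx] at hcent
    have hg1 : ((W ++ [c]).drop i)[t-1]'(by rw [hσlen]; omega) = (W ++ [c])[i + (t-1)]'(by simp; omega) :=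
      List.getElem_drop
    have hg2 : ((W ++ [c]).drop i)[t]'(by rw [hσlen]; omega) = (W ++ [c])[i + t]'(by simp; omega) :=
      List.getElem_drop
    have hitn : i + t ≤ n - 1 := by omega
    have hg3 : (W ++ [c])[i + (t-1)]'(by simp; omega) = W[i + (t-1)]'(by omega) :=
      List.getElem_append_left (by omega)
    have hg4 : (W ++ [c])[i + t]'(by simp; omega) = W[i + t]'(by omega) :=
      List.getElem_append_left (by omega)
    rw [hg1, hg2, hg3, hg4] at hcent
    -- parity contradiction
    have e1 := hiff (i + (t-1)) (by omega)
    have e2 := hiff (i + t) (by omega)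
    have hne : ¬ (((i + (t-1)) % 2 = 0) ↔ ((i + t) % 2 = 0)) := by omega
    exact hne ⟨fun h => e2.1 (hcent.symm.trans (e1.2 h)), fun h => e1.1 (hcent.trans (e2.2 h))⟩
  · have h1 : (W ++ [c]).take (n-1) = W.take (n-1) := List.take_append_of_le_length (by omega)
    rw [h1]
    have h2 : (W.take (n-1)).reverse = W.drop 1 := by
      have h3 : (W.take (n-1)).reverse = W.reverse.drop (n - (n-1)) := List.reverse_take
      rw [hWpal] at h3
      rw [h3]
      congr 1
      omega
    rw [h2, List.append_assoc]
    rfl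

lemma split_append (l r : List A) (n : ℕ) : l ++ r = l.take n ++ (l.drop n ++ r) := by
  rw [← List.append_assoc, List.take_append_drop]

lemma eq_take_append_of_drop {W V : List A} {n : ℕ} (h : W.drop n = V) :
    W = W.take n ++ V := by rw [← h, List.take_append_drop]

lemma head_cons_drop {l : List A} (h : 0 < l.length) : l = l[0] :: l.drop 1 := by
  conv_lhs => rw [← List.drop_zero (l := l)]
  rw [List.drop_eq_getElem_cons h]

lemma prefix_getElem_list {V W : List A} (h : V <+: W) {i : ℕ} (hi : i < V.length) :
    W[i]'(lt_of_lt_of_le hi h.length_le) = V[i] := by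
  have h2 := List.prefix_iff_eq_take.1 h
  rw [List.getElem_of_eq h2 hi, List.getElem_take]

lemma nodup_getElem_not_mem_take {x : List A} (hnd : x.Nodup) {j : ℕ} (hj : j < x.length) :
    x[j] ∉ x.take j := by
  intro hmem
  rw [List.mem_take_iff_getElem] at hmem
  obtain ⟨i, hi, hieq⟩ := hmem
  have : i = j := (List.Nodup.getElem_inj_iff hnd).1 hieq
  omega

lemma prefix_getElem {s : ℕ → A} {W : List A} (h : IsPrefixOf W s) {i : ℕ}
    (hi : i < W.length) : W[i] = s i := by
  unfold IsPrefixOf at h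
  rw [List.getElem_of_eq h hi]
  simp

lemma factor_of_infix_prefix {s : ℕ → A} {W u : List A} (h : IsPrefixOf W s)
    (hinf : u <:+: W) : IsFactorOf u s := by
  obtain ⟨t, r, htr⟩ := hinf
  refine ⟨t.length, ?_⟩
  apply List.ext_getElem (by simp)
  intro i h1 h2
  simp only [List.getElem_map, List.getElem_range]
  have hlen : t.length + i < W.length := by
    rw [← htr]; simp; omega
  rw [← prefix_getElem h hlen]
  have he := List.getElem_of_eq htr.symm hlen
  rw [he, List.getElem_append_left (by simp; omega : t.length + i < (t ++ u).length),
    List.getElem_append_right (by omega : t.length ≤ t.length + i)]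
  congr 1
  omega

lemma map_range_wcat_le {u : List A} {y : ℕ → A} {n : ℕ} (hn : n ≤ u.length) :
    (List.range n).map (wcat u y) = u.take n := by
  apply List.ext_getElem (by simp; omega)
  intro i h1 h2
  simp only [List.getElem_map, List.getElem_range, List.getElem_take]
  unfold wcat
  rw [dif_pos (by simp at h1; omega)]
  simp

lemma map_range_wcat_add (u : List A) (y : ℕ → A) (k : ℕ) :
    (List.range (u.length + k)).map (wcat u y) = u ++ (List.range k).map y := by
  apply List.ext_getElem (by simp)
  intro i h1 h2
  simp only [List.getElem_map, List.getElem_range]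
  unfold wcat
  by_cases hi : i < u.length
  · rw [dif_pos hi, List.getElem_append_left hi]
    simp
  · rw [dif_neg hi, List.getElem_append_right (by omega)]
    simp

lemma range_succ_map (f : ℕ → A) (n : ℕ) :
    (List.range (n+1)).map f = (List.range n).map f ++ [f n] := by
  rw [List.range_succ, List.map_append]
  rfl

lemma s_letters {s Δ : ℕ → A} (hepi : IsStdEpisturmian s Δ) (n : ℕ) : ∃ i, s n = Δ i := by
  have h := hepi (n+1)
  have hlen : n < (Pal ((List.range (n+1)).map Δ)).length :=
    lt_of_lt_of_le (by simp) (length_Pal _)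
  have h2 : (Pal ((List.range (n+1)).map Δ))[n] = s n := prefix_getElem h hlen
  have hmem : s n ∈ Pal ((List.range (n+1)).map Δ) := h2 ▸ List.getElem_mem hlen
  have := mem_Pal hmem
  rw [List.mem_map] at this
  obtain ⟨i, _, hi⟩ := this
  exact ⟨i, hi.symm⟩

lemma unbalanced_pair {s : ℕ → A} (hbal : IsBalanced s) {u v : List A} {a : A}
    (hu : IsFactorOf u s) (hv : IsFactorOf v s) (hlen : u.length = v.length)
    (hcu : 2 ≤ u.count a) (hcv : v.count a = 0) : False := by
  have := hbal u v hu hv hlen a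
  omega

end Aux

open Aux in
/-- If `s` is a balanced standard episturmian sequence over at least 3 letters whose
directive sequence is `Δ = x·α^ℓ·y` with `α` the first repeated letter (`ℓ ≥ 2`),
then no letter of `x` occurs in `y`. -/
theorem no_letter_of_x_in_y {A : Type*} [DecidableEq A] (s Δ : ℕ → A)
    (x : List A) (α : A) (ℓ : ℕ) (y : ℕ → A)
    (hbal : IsBalanced s) (hepi : IsStdEpisturmian s Δ) (h3 : ThreeLetters s)
    (hx : x ≠ []) (hℓ : 2 ≤ ℓ) (hnd : (x ++ [α]).Nodup)
    (hΔ : Δ = wcat (x ++ List.replicate ℓ α) y) :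
    ∀ b ∈ x, b ∉ Set.range y := by
  intro b hb hbrange
  obtain ⟨k0, hk0⟩ := hbrange
  classical
  -- basic facts from nodup
  have hxnd : x.Nodup := (List.nodup_append.1 hnd).1
  have hαx : α ∉ x := by
    rcases List.nodup_append.1 hnd with ⟨-, -, hdisj⟩
    intro h
    exact hdisj α h α (by simp) rfl
  have hm : 1 ≤ x.length := List.length_pos_iff.2 hx
  -- the first recurrence of a letter of x in y
  have hex : ∃ k, y k ∈ x := ⟨k0, by rw [hk0]; exact hb⟩
  set k := Nat.find hex with hk
  have hyk : y k ∈ x := Nat.find_spec hex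
  have hmink : ∀ j < k, y j ∉ x := fun j hj => Nat.find_min hex hj
  obtain ⟨jx, hjx, hxjx⟩ := List.getElem_of_mem hyk
  -- abbreviations
  set u0 : List A := x ++ List.replicate ℓ α with hu0
  have hu0len : u0.length = x.length + ℓ := by simp [hu0]
  set P := Pal x with hP
  set p := P.length with hp
  have hPpal : P.reverse = P := Pal_palin x
  have hple : x.length ≤ p := length_Pal x
  have hαP : α ∉ P := fun h => hαx (mem_Pal h)
  -- directive prefixes
  have hmapN : ∀ K : ℕ, (List.range (u0.length + K)).map Δ = u0 ++ (List.range K).map y := by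
    intro K
    rw [hΔ]
    exact map_range_wcat_add u0 y K
  have hxα : (List.range (x.length + 1)).map Δ = x ++ [α] := by
    rw [hΔ, map_range_wcat_le (by rw [hu0len]; omega), hu0, List.take_append,
      List.take_of_length_le (by omega), Nat.add_sub_cancel_left, List.take_replicate, min_eq_left (by omega : 1 ≤ ℓ)]
    rfl
  have hxαα : (List.range (x.length + 2)).map Δ = x ++ [α, α] := by
    rw [hΔ, map_range_wcat_le (by rw [hu0len]; omega), hu0, List.take_append,
      List.take_of_length_le (by omega), Nat.add_sub_cancel_left, List.take_replicate, min_eq_left (by omega : 2 ≤ ℓ)]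
    rfl
  have hΔN : Δ (u0.length + k) = y k := by
    rw [hΔ]
    unfold wcat
    rw [dif_neg (by omega)]
    congr 1
    omega
  have hPalxαPre : IsPrefixOf (P ++ α :: P) s := by
    have := hepi (x.length + 1)
    rw [hxα, Pal_new hαx hx] at this
    exact this
  have hPalxααPre : IsPrefixOf (P ++ α :: (P ++ α :: P)) s := by
    have := hepi (x.length + 2)
    rw [hxαα, Pal_two_alpha hαx hx] at this
    exact this
  by_cases hjx1 : 1 ≤ jx
  · -- CASE A : the recurring letter is not the first letter of x
    set b' := y k with hb'
    set x1 := x.take jx with hx1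
    have hx1len : x1.length = jx := by rw [hx1, List.length_take]; omega
    have hx1ne : x1 ≠ [] := by
      intro h
      rw [h] at hx1len
      simp at hx1len
      omega
    set Q := Pal x1 with hQ
    set q := Q.length with hq
    have hQpal : Q.reverse = Q := Pal_palin _
    have hb'x1 : b' ∉ x1 := by
      rw [hx1, ← hxjx]
      exact nodup_getElem_not_mem_take hxnd hjx
    have hQb : b' ∉ Q := fun h => hb'x1 (mem_Pal h)
    have htakesucc : x.take (jx + 1) = x1 ++ [b'] := by
      rw [List.take_succ, List.getElem?_eq_getElem hjx, hxjx]
      rfl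
    have hPalQ : Pal (x.take (jx + 1)) = Q ++ b' :: Q := by
      rw [htakesucc, Pal_new hb'x1 hx1ne]
    -- W and its prefix/suffix structure
    set W := Pal ((List.range (u0.length + k)).map Δ) with hW
    have hWpal : W.reverse = W := Pal_palin _
    have hpreQ : Q ++ b' :: Q <+: W := by
      rw [← hPalQ, hW, hmapN k]
      have hdec : u0 ++ (List.range k).map y
          = x.take (jx + 1) ++ (x.drop (jx + 1) ++ (List.replicate ℓ α ++ (List.range k).map y)) := by
        rw [hu0, ← List.append_assoc, List.take_append_drop, List.append_assoc]
      rw [hdec]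
      exact Pal_prefix _ _
    have hWq : 2 * q + 1 ≤ W.length := by
      have := hpreQ.length_le
      simp at this
      omega
    have hpQb : Q ++ [b'] <+: W :=
      List.IsPrefix.trans ⟨Q, by simp⟩ hpreQ
    have hsuffix : W.drop (W.length - (q + 1)) = b' :: Q := by
      have h1 := drop_of_prefix_palin hpQb hWpal
      rw [List.reverse_append, hQpal] at h1
      simpa using h1
    -- u = b' (Q) b' is a factor of s
    have hinfu : b' :: (Q ++ [b']) <:+: W ++ [b'] := by
      refine ⟨W.take (W.length - (q + 1)), [], ?_⟩
      rw [List.append_nil]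
      have h2 : W = W.take (W.length - (q + 1)) ++ (b' :: Q) := eq_take_append_of_drop hsuffix
      conv_rhs => rw [h2]
      simp
    have hufac : IsFactorOf (b' :: (Q ++ [b'])) s := by
      apply factor_of_infix_prefix (hepi (u0.length + k + 1))
      apply List.IsInfix.trans hinfu
      apply List.IsPrefix.isInfix
      rw [range_succ_map, hΔN, Pal_snoc, ← hW]
      exact palClosure_prefix _
    -- v = Q α x[0] is a factor of s
    have hQP : Q <+: P := by
      rw [hQ, hx1, hP]
      conv_rhs => rw [← List.take_append_drop jx x]
      exact Pal_prefix _ _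
    have hqp : q ≤ p := hQP.length_le
    have hppos : 0 < p := by omega
    have hQsufP : P.drop (p - q) = Q := by
      have := drop_of_prefix_palin hQP hPpal
      rw [hQpal] at this
      exact this
    have hPsplit : P = P.take (p - q) ++ Q := eq_take_append_of_drop hQsufP
    have hPhead : P = P[0]'hppos :: P.drop 1 := head_cons_drop hppos
    have hinfv : Q ++ [α, P[0]'hppos] <:+: P ++ α :: P := by
      refine ⟨P.take (p - q), P.drop 1, ?_⟩
      calc P.take (p - q) ++ (Q ++ [α, P[0]'hppos]) ++ P.drop 1
          = (P.take (p - q) ++ Q) ++ α :: (P[0]'hppos :: P.drop 1) := by simp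
        _ = P ++ α :: P := by rw [← hPsplit, ← hPhead]
    have hvfac : IsFactorOf (Q ++ [α, P[0]'hppos]) s :=
      factor_of_infix_prefix hPalxαPre hinfv
    -- counts
    have hP0 : P[0]'hppos = x[0]'(by omega) := by
      obtain ⟨hh, hhe⟩ := Pal_head hx
      exact hhe
    have hb'α : b' ≠ α := fun h => hαx (h ▸ hyk)
    have hb'x0 : b' ≠ x[0]'(by omega) := by
      intro h
      have : x[jx] = x[0]'(by omega) := by rw [hxjx, ← h]
      have := (List.Nodup.getElem_inj_iff hxnd).1 this
      omega
    have hcu : 2 ≤ (b' :: (Q ++ [b'])).count b' := by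
      simp [List.count_cons, List.count_append, List.count_eq_zero.2 hQb]
    have hcv : (Q ++ [α, P[0]'hppos]).count b' = 0 := by
      rw [List.count_eq_zero]
      intro hmem
      rcases List.mem_append.1 hmem with h | h
      · exact hQb h
      · rw [hP0] at h
        simp at h
        rcases h with h | h
        · exact hb'α h
        · exact hb'x0 h
    exact unbalanced_pair hbal hufac hvfac (by simp) hcu hcv
  · -- jx = 0 : the recurring letter is the first letter of x
    have hjx0 : jx = 0 := by omega
    have hxpos : 0 < x.length := by omega
    set a := x[0]'hxpos with ha
    have hya : y k = a := by
      rw [← hxjx]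
      exact getElem_idx_congr x hjx0 hjx
    have haα : a ≠ α := fun h => hαx (h ▸ List.getElem_mem hxpos)
    have hppos : 0 < p := by omega
    by_cases hm2 : 2 ≤ x.length
    · -- CASE B : |x| ≥ 2, use the separation lemma
      set vt : List A := x.drop 1 ++ (List.replicate ℓ α ++ (List.range k).map y) with hvt
      have hxsplit : x = a :: x.drop 1 := head_cons_drop hxpos
      have hmapNval : (List.range (u0.length + k)).map Δ = a :: vt := by
        rw [hmapN k, hu0, List.append_assoc, hvt]
        conv_lhs => rw [hxsplit]
        rfl
      have hanotvt : a ∉ vt := by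
        rw [hvt]
        intro hmem
        rcases List.mem_append.1 hmem with h | h
        · obtain ⟨i, hi, hieq⟩ := List.getElem_of_mem h
          have hi' : 1 + i < x.length := by
            simp only [List.length_drop] at hi
            omega
          have h2 : x[1 + i]'hi' = x[0]'hxpos := by
            have h3 : (x.drop 1)[i] = x[1 + i]'hi' := List.getElem_drop
            rw [← h3, hieq, ha]
          have := (List.Nodup.getElem_inj_iff hxnd).1 h2
          omega
        · rcases List.mem_append.1 h with h | h
          · have h2 : a = α := List.eq_of_mem_replicate h
            exact haα h2
          · rw [List.mem_map] at h
            obtain ⟨i, hi, hieq⟩ := h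
            simp only [List.mem_range] at hi
            apply hmink i hi
            rw [hieq, ha]
            exact List.getElem_mem hxpos
      obtain ⟨hodd, hiff⟩ := separation hanotvt
      set W := Pal (a :: vt) with hW
      have hWpal : W.reverse = W := Pal_palin _
      -- P is a prefix (hence suffix) of W
      have haar : x ++ (List.replicate ℓ α ++ (List.range k).map y) = a :: vt := by
        rw [hvt]
        conv_lhs => rw [hxsplit]
        rfl
      have hPW : P <+: W := by
        rw [hP, hW, ← haar]
        exact Pal_prefix _ _
      have hpm : 2 ≤ p := by omega
      have hWlen2 : 2 ≤ W.length := by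
        have := hPW.length_le
        omega
      have hPsufW : W.drop (W.length - p) = P := by
        have h1 := drop_of_prefix_palin hPW hWpal
        rw [hPpal] at h1
        exact h1
      -- the next palindromic prefix: Pal(wN · a) = W a (W.drop 1)
      have hmapN1 : (List.range (u0.length + k + 1)).map Δ = (a :: vt) ++ [a] := by
        rw [range_succ_map, hΔN, hya, hmapNval]
      have hprefN1 : IsPrefixOf (W ++ a :: W.drop 1) s := by
        have h1 := hepi (u0.length + k + 1)
        rw [hmapN1, Pal_return hanotvt, ← hW] at h1
        exact h1
      -- W[1] = x[1]
      have hx1lt : 1 < x.length := by omega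
      have hx10 : x[1]'hx1lt ≠ x[0]'hxpos := by
        intro h
        have := (List.Nodup.getElem_inj_iff hxnd).1 h
        omega
      have htake2 : x.take 2 = [x[0]'hxpos, x[1]'hx1lt] := by
        apply List.ext_getElem (by simp; omega)
        intro i h1 h2
        rw [List.getElem_take]
        have h2' : i < 2 := by simpa using h2
        interval_cases i <;> simp
      have hPal2 : Pal (x.take 2) = [x[0]'hxpos, x[1]'hx1lt, x[0]'hxpos] := by
        rw [htake2, show [x[0]'hxpos, x[1]'hx1lt] = [x[0]'hxpos] ++ [x[1]'hx1lt] from rfl,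
          Pal_new (by simpa using hx10) (by simp), Pal_singleton]
        rfl
      have hPal2W : Pal (x.take 2) <+: W := by
        rw [hW, ← haar, split_append x _ 2]
        exact Pal_prefix _ _
      have hW1 : W[1]'(by omega) = x[1]'hx1lt := by
        have h3 := prefix_getElem_list hPal2W (i := 1) (by rw [hPal2]; simp)
        have h4 : (Pal (x.take 2))[1]'(by rw [hPal2]; simp) = x[1]'hx1lt := by
          rw [List.getElem_of_eq hPal2]
          simp
        exact h3.trans h4
      have hW1α : W[1]'(by omega) ≠ α := by
        rw [hW1]
        intro h
        exact hαx (h ▸ List.getElem_mem hx1lt)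
      -- v = P a W[1] is a factor of s
      have hWsplit : W = W.take (W.length - p) ++ P := eq_take_append_of_drop hPsufW
      have hdrop1 : W.drop 1 = W[1]'(by omega) :: W.drop 2 :=
        List.drop_eq_getElem_cons (by omega)
      have hinfv : P ++ [a, W[1]'(by omega)] <:+: W ++ a :: W.drop 1 := by
        refine ⟨W.take (W.length - p), W.drop 2, ?_⟩
        calc W.take (W.length - p) ++ (P ++ [a, W[1]'(by omega)]) ++ W.drop 2
            = (W.take (W.length - p) ++ P) ++ a :: (W[1]'(by omega) :: W.drop 2) := by simp
          _ = W ++ a :: W.drop 1 := by rw [← hWsplit, ← hdrop1]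
      have hvfac := factor_of_infix_prefix hprefN1 hinfv
      -- u = α P α is a factor of s
      have hinfu : α :: (P ++ [α]) <:+: P ++ α :: (P ++ α :: P) := ⟨P, P, by simp⟩
      have hufac := factor_of_infix_prefix hPalxααPre hinfu
      -- counts
      have hcu : 2 ≤ (α :: (P ++ [α])).count α := by
        simp [List.count_cons, List.count_append]
      have hcv : (P ++ [a, W[1]'(by omega)]).count α = 0 := by
        rw [List.count_eq_zero]
        intro hmem
        rcases List.mem_append.1 hmem with h | h
        · exact hαP h
        · simp only [List.mem_cons, List.mem_singleton] at h
          rcases h with h | h | h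
          · exact haα h.symm
          · exact hW1α h.symm
          · simp at h
      exact unbalanced_pair hbal hufac hvfac (by simp) hcu hcv
    · -- CASE C : x = [a], use a third letter
      have hxlen1 : x.length = 1 := by omega
      have hxa : x = [a] := by
        conv_lhs => rw [head_cons_drop hxpos]
        rw [← ha]
        congr 1
        rw [List.drop_eq_nil_iff]
        omega
      have hPala : P = [a] := by rw [hP, hxa, Pal_singleton]
      -- u = [α, a, α] is a factor of s
      have hinfu : [α, a, α] <:+: P ++ α :: (P ++ α :: P) := by
        rw [hPala]
        exact ⟨[a], [a], by simp⟩
      have hufac := factor_of_infix_prefix hPalxααPre hinfu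
      -- a third letter exists in Δ
      have hthird : ∃ n, ¬ (Δ n = a ∨ Δ n = α) := by
        by_contra hcon
        push_neg at hcon
        obtain ⟨a0, b0, c0, hab, hac, hbc, ⟨n1, hn1⟩, ⟨n2, hn2⟩, ⟨n3, hn3⟩⟩ := h3
        obtain ⟨i1, hi1⟩ := s_letters hepi n1
        obtain ⟨i2, hi2⟩ := s_letters hepi n2
        obtain ⟨i3, hi3⟩ := s_letters hepi n3
        have e1 : a0 = a ∨ a0 = α := by rw [← hn1, hi1]; exact hcon i1
        have e2 : b0 = a ∨ b0 = α := by rw [← hn2, hi2]; exact hcon i2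
        have e3 : c0 = a ∨ c0 = α := by rw [← hn3, hi3]; exact hcon i3
        rcases e1 with e1 | e1 <;> rcases e2 with e2 | e2 <;> rcases e3 with e3 | e3 <;>
          subst e1 <;> subst e2 <;> subst e3 <;>
          first
            | exact hab rfl
            | exact hac rfl
            | exact hbc rfl
      set N' := Nat.find hthird with hN'
      have hcN' : ¬ (Δ N' = a ∨ Δ N' = α) := Nat.find_spec hthird
      have hminN' : ∀ i < N', Δ i = a ∨ Δ i = α := fun i hi =>
        of_not_not (Nat.find_min hthird hi)
      have hΔ0 : Δ 0 = a := by
        rw [hΔ]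
        unfold wcat
        rw [dif_pos (by rw [hu0len]; omega)]
        simp only [List.get_eq_getElem]
        exact List.getElem_append_left hxpos
      have hN'pos : 1 ≤ N' := by
        by_contra hcontra
        apply hcN'
        left
        have : N' = 0 := by omega
        rw [this, hΔ0]
      have hwN'ne : (List.range N').map Δ ≠ [] := by
        simp only [ne_eq, List.map_eq_nil_iff, List.range_eq_nil]
        omega
      have hcnot : Δ N' ∉ (List.range N').map Δ := by
        intro hmem
        rw [List.mem_map] at hmem
        obtain ⟨i, hi, hieq⟩ := hmem
        simp only [List.mem_range] at hi
        apply hcN'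
        rw [← hieq]
        exact hminN' i hi
      set W' := Pal ((List.range N').map Δ) with hW'
      have hW'pal : W'.reverse = W' := Pal_palin _
      have hW'len : 1 ≤ W'.length := by
        have h1 := length_Pal ((List.range N').map Δ)
        rw [← hW'] at h1
        simp only [List.length_map, List.length_range] at h1
        omega
      have hmapN'1 : (List.range (N' + 1)).map Δ = (List.range N').map Δ ++ [Δ N'] :=
        range_succ_map Δ N'
      have hprefN'1 : IsPrefixOf (W' ++ Δ N' :: W') s := by
        have h1 := hepi (N' + 1)
        rw [hmapN'1, Pal_new hcnot hwN'ne, ← hW'] at h1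
        exact h1
      have hW'0 : W'[0]'(by omega) = a := by
        obtain ⟨hh, hhe⟩ := Pal_head hwN'ne
        have h2 : ((List.range N').map Δ)[0]'(by simp; omega) = a := by
          rw [List.getElem_map]
          simp only [List.getElem_range]
          exact hΔ0
        exact hhe.trans h2
      have hlastW' : W'.drop (W'.length - 1) = [a] := by
        have h1 : W'[W'.length - 1]'(by omega) = a := by
          rw [← palin_first_last hW'pal (by omega)]
          exact hW'0
        rw [List.drop_eq_getElem_cons (by omega : W'.length - 1 < W'.length), h1]
        have h2 : W'.drop (W'.length - 1 + 1) = [] := by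
          rw [List.drop_eq_nil_iff]
          omega
        rw [h2]
      have hinfv : [a, Δ N', a] <:+: W' ++ Δ N' :: W' := by
        refine ⟨W'.take (W'.length - 1), W'.drop 1, ?_⟩
        calc W'.take (W'.length - 1) ++ [a, Δ N', a] ++ W'.drop 1
            = (W'.take (W'.length - 1) ++ [a]) ++ Δ N' :: (a :: W'.drop 1) := by simp
          _ = W' ++ Δ N' :: W' := by
              rw [← eq_take_append_of_drop hlastW']
              congr 2
              rw [← hW'0]
              exact (head_cons_drop (by omega)).symm
      have hvfac := factor_of_infix_prefix hprefN'1 hinfv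
      have hcα : Δ N' ≠ α := fun h => hcN' (Or.inr h)
      have hcu : 2 ≤ ([α, a, α] : List A).count α := by
        simp [List.count_cons]
      have hcv : ([a, Δ N', a] : List A).count α = 0 := by
        rw [List.count_eq_zero]
        intro hmem
        simp only [List.mem_cons, List.mem_singleton] at hmem
        rcases hmem with h | h | h
        · exact haα h.symm
        · exact hcα h.symm
        · simp at h
          exact haα h.symm
      exact unbalanced_pair hbal hufac hvfac (by simp) hcu hcv
end

section
/- Let s be a balanced standard episturmian sequence over an alphabet A such that at least 3 distinct letters occur in s, with directive sequence Δ = x·k·y·k·z, where x is a nonempty finite word, y is a finite word, z is an infinite word, k is a letter different from the first letter of x, and the letters of x·k·y are pairwise distinct (so that k is the first repeated letter of Δ and it is not the first letter of Δ). Then y = ε and z = k^ω; that is, Δ = x·k·k^ω consists of pairwise distinct letters followed by a constant tail. -/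
set_option linter.unusedSectionVars false

namespace EpiAux
variable {A : Type*} [DecidableEq A]

theorem pc_ex (w : List A) : ∃ i, ((w.drop i).reverse = w.drop i) := ⟨w.length, by simp⟩

theorem palClosure_def (w : List A) :
    palClosure w = w ++ (w.take (Nat.find (pc_ex w))).reverse := rfl

theorem palClosure_prefix (w : List A) : w <+: palClosure w := ⟨_, rfl⟩

theorem palClosure_spec (w : List A) :
    ((w.drop (Nat.find (pc_ex w))).reverse = w.drop (Nat.find (pc_ex w))) :=
  Nat.find_spec (pc_ex w)

theorem palClosure_palindrome (w : List A) :
    (palClosure w).reverse = palClosure w := by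
  rw [palClosure_def]
  set i := Nat.find (pc_ex w) with hi
  have hs : (List.drop i w).reverse = List.drop i w := palClosure_spec w
  calc (w ++ (w.take i).reverse).reverse
      = w.take i ++ w.reverse := by simp
    _ = w.take i ++ ((w.take i ++ w.drop i).reverse) := by rw [List.take_append_drop]
    _ = w.take i ++ (w.drop i).reverse ++ (w.take i).reverse := by
        simp [List.reverse_append, List.append_assoc]
    _ = w.take i ++ w.drop i ++ (w.take i).reverse := by rw [hs]
    _ = w ++ (w.take i).reverse := by rw [List.take_append_drop]

theorem palClosure_of_find (w : List A) (i : ℕ)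
    (h1 : (w.drop i).reverse = w.drop i) (h2 : ∀ j < i, ¬((w.drop j).reverse = w.drop j)) :
    palClosure w = w ++ (w.take i).reverse := by
  rw [palClosure_def]
  have : Nat.find (pc_ex w) = i := (Nat.find_eq_iff (pc_ex w)).2 ⟨h1, h2⟩
  rw [this]

theorem mem_palClosure {w : List A} {a : A} (h : a ∈ palClosure w) : a ∈ w := by
  rw [palClosure_def] at h
  rcases List.mem_append.1 h with h | h
  · exact h
  · exact List.mem_of_mem_take (List.mem_reverse.1 h)

theorem palClosure_length (w : List A) :
    (palClosure w).length = w.length + Nat.find (pc_ex w) := by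
  have hfind : Nat.find (pc_ex w) ≤ w.length := Nat.find_le (by simp)
  rw [palClosure_def]
  simp [List.length_take, Nat.min_eq_left hfind]

theorem palindrome_length_of_prefix {R u : List A} (hR : R.reverse = R) (hu : u <+: R) :
    (palClosure u).length ≤ R.length := by
  obtain ⟨t, rfl⟩ := hu
  rcases le_or_gt (Nat.find (pc_ex u)) t.length with h | h
  · rw [palClosure_length]
    simp only [List.length_append]
    omega
  · exfalso
    set j := t.length with hj
    have hfind : Nat.find (pc_ex u) ≤ u.length := Nat.find_le (by simp)
    have hjlt : j < u.length := by omega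
    have hdropR : (u ++ t).drop j = u.reverse := by
      conv_lhs => rw [← hR]
      rw [List.reverse_append]
      rw [List.drop_append_of_le_length (by simp [hj])]
      simp [hj]
    have hsplit : (u ++ t).drop j = u.drop j ++ t :=
      List.drop_append_of_le_length (le_of_lt hjlt)
    have h2 : u.drop j ++ t = u.reverse := by rw [← hsplit, hdropR]
    have h3 : u.drop j = (u.reverse).take (u.length - j) := by
      rw [← h2, List.take_append_of_le_length (by simp [List.length_drop]),
        List.take_of_length_le (by simp [List.length_drop])]
    have key : (u.drop j).reverse = u.drop j := by
      conv_lhs => rw [h3, List.reverse_take]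
      simp only [List.reverse_reverse, List.length_reverse]
      congr 1
      omega
    exact (Nat.find_min (pc_ex u) h) key


theorem Pal_nil : Pal ([] : List A) = [] := rfl

theorem Pal_append_singleton (w : List A) (d : A) :
    Pal (w ++ [d]) = palClosure (Pal w ++ [d]) := by
  unfold Pal
  rw [List.foldl_append]
  rfl

theorem Pal_palindrome (w : List A) : (Pal w).reverse = Pal w := by
  induction w using List.reverseRecOn with
  | nil => rfl
  | append_singleton w d ih => rw [Pal_append_singleton]; exact palClosure_palindrome _

theorem Pal_prefix_snoc (w : List A) (d : A) : Pal w ++ [d] <+: Pal (w ++ [d]) := by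
  rw [Pal_append_singleton]; exact palClosure_prefix _

theorem Pal_prefix_mono {v w : List A} (h : v <+: w) : Pal v <+: Pal w := by
  induction w using List.reverseRecOn with
  | nil => simpa [List.prefix_nil.1 h]
  | append_singleton w d ih =>
    rcases List.prefix_concat_iff.1 h with rfl | h'
    · exact List.prefix_rfl
    · exact (ih h').trans ((((Pal w).prefix_append [d])).trans (Pal_prefix_snoc w d))

theorem mem_Pal {w : List A} {a : A} (h : a ∈ Pal w) : a ∈ w := by
  induction w using List.reverseRecOn with
  | nil => simpa [Pal_nil] using h
  | append_singleton w d ih =>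
    rw [Pal_append_singleton] at h
    rcases List.mem_append.1 (mem_palClosure h) with h' | h'
    · exact List.mem_append_left _ (ih h')
    · simp at h' ⊢; right; exact h'

theorem Pal_length_lower {v w : List A} (h : v <+: w) :
    (Pal v).length + (w.length - v.length) ≤ (Pal w).length := by
  induction w using List.reverseRecOn with
  | nil => rw [List.prefix_nil.1 h]; simp
  | append_singleton w d ih =>
    rcases List.prefix_concat_iff.1 h with rfl | h'
    · simp
    · have h1 := ih h'
      have h2 : (Pal w).length + 1 ≤ (Pal (w ++ [d])).length := by
        have := (Pal_prefix_snoc w d).length_le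
        simpa using this
      have h3 : v.length ≤ w.length := h'.length_le
      simp only [List.length_append, List.length_cons, List.length_nil]
      omega

theorem Pal_length_ge (w : List A) : w.length ≤ (Pal w).length := by
  have := Pal_length_lower (List.nil_prefix (l := w))
  rw [Pal_nil] at this
  simpa using this

/-- Palindromic prefixes of `Pal w` are exactly the `Pal v` for prefixes `v` of `w`. -/
theorem pal_prefix_Pal {w Q : List A} (hQ : Q.reverse = Q) (hpre : Q <+: Pal w) :
    ∃ v, v <+: w ∧ Pal v = Q := by
  induction w using List.reverseRecOn with
  | nil => exact ⟨[], List.prefix_rfl, ((List.prefix_nil).1 hpre).symm⟩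
  | append_singleton w d ih =>
    rcases le_or_gt Q.length (Pal w).length with hle | hgt
    · have : Q <+: Pal w := by
        have h1 : Pal w <+: Pal (w ++ [d]) := Pal_prefix_mono (by simp)
        exact List.prefix_of_prefix_length_le hpre h1 hle
      obtain ⟨v, hv, hQv⟩ := ih this
      exact ⟨v, hv.trans (by simp), hQv⟩
    · have hu : Pal w ++ [d] <+: Q := by
        apply List.prefix_of_prefix_length_le (Pal_prefix_snoc w d) hpre
        simpa using Nat.succ_le_of_lt hgt
      have hmin := palindrome_length_of_prefix hQ hu
      rw [← Pal_append_singleton] at hmin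
      have : Q = Pal (w ++ [d]) := by
        have h4 := List.prefix_iff_eq_take.1 hpre
        rw [h4, List.take_of_length_le (le_antisymm hpre.length_le hmin ▸ le_rfl)]
      exact ⟨w ++ [d], List.prefix_rfl, this.symm⟩

theorem palClosure_new {u : List A} {d : A} (hd : d ∉ u) :
    palClosure (u ++ [d]) = u ++ [d] ++ u.reverse := by
  have h1 : ((u ++ [d]).drop u.length).reverse = (u ++ [d]).drop u.length := by
    rw [List.drop_append_of_le_length le_rfl]
    simp
  have h2 : ∀ j < u.length, ¬(((u ++ [d]).drop j).reverse = (u ++ [d]).drop j) := by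
    intro j hj hpal
    rw [List.drop_append_of_le_length hj.le] at hpal
    have hne : u.drop j ≠ [] := by
      intro hnil
      have := congrArg List.length hnil
      simp [List.length_drop] at this
      omega
    obtain ⟨a, t, hat⟩ := List.exists_cons_of_ne_nil hne
    rw [hat] at hpal
    have hpal' : d :: (t.reverse ++ [a]) = a :: (t ++ [d]) := by
      simpa using hpal
    rw [List.cons.injEq] at hpal'
    have hd2 : d ∈ u.drop j := by rw [hat, hpal'.1]; simp
    exact hd (List.mem_of_mem_drop hd2)
  have := palClosure_of_find (u ++ [d]) u.length h1 h2
  rw [this, List.take_append_of_le_length le_rfl, List.take_length]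

theorem Pal_new_letter {w : List A} {d : A} (hd : d ∉ w) :
    Pal (w ++ [d]) = Pal w ++ [d] ++ Pal w := by
  rw [Pal_append_singleton, palClosure_new (fun h => hd (mem_Pal h)), Pal_palindrome]

theorem Pal_next {v w : List A} {d : A} (h : v ++ [d] <+: w) : Pal v ++ [d] <+: Pal w :=
  (Pal_prefix_snoc v d).trans (Pal_prefix_mono h)

theorem prefix_eq_of_length {u v w : List A} (hu : u <+: w) (hv : v <+: w)
    (h : u.length = v.length) : u = v := by
  rcases List.prefix_or_prefix_of_prefix hu hv with h' | h'
  · exact List.IsPrefix.eq_of_length h' h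
  · exact (List.IsPrefix.eq_of_length h' h.symm).symm

theorem next_letter_unique {u w : List A} {d d' : A}
    (h1 : u ++ [d] <+: w) (h2 : u ++ [d'] <+: w) : d = d' := by
  have := prefix_eq_of_length h1 h2 (by simp)
  have := List.append_cancel_left this
  simpa using this

theorem snoc_get_prefix {v w : List A} (h : v <+: w) (hlt : v.length < w.length) :
    v ++ [w.get ⟨v.length, hlt⟩] <+: w := by
  have h1 : v = w.take v.length := List.prefix_iff_eq_take.1 h
  have h2 : w.take (v.length + 1) = w.take v.length ++ [w.get ⟨v.length, hlt⟩] := by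
    rw [List.take_succ]
    congr 1
    simp [List.getElem?_eq_getElem hlt]
  have h3 : v ++ [w.get ⟨v.length, hlt⟩] = w.take v.length ++ [w.get ⟨v.length, hlt⟩] :=
    congrArg (fun l => l ++ [w.get ⟨v.length, hlt⟩]) h1
  rw [h3, ← h2]
  exact List.take_prefix _ _

theorem palindrome_drop_of_prefix {W P : List A} (hW : W.reverse = W) (h : P <+: W) :
    W.drop (W.length - P.length) = P.reverse := by
  have h1 : (W.take P.length).reverse = W.drop (W.length - P.length) := by
    conv_rhs => rw [← hW]
    rw [List.reverse_take]
    rw [hW]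
  rw [← h1]
  congr 1
  exact (List.prefix_iff_eq_take.1 h).symm

theorem palindrome_sandwich {S' : List A} {a b : A}
    (h : ((a :: S') ++ [b]).reverse = (a :: S') ++ [b]) : b = a ∧ S'.reverse = S' := by
  have h' : b :: (S'.reverse ++ [a]) = a :: (S' ++ [b]) := by simpa using h
  rw [List.cons.injEq] at h'
  obtain ⟨rfl, h2⟩ := h' 
  refine ⟨rfl, ?_⟩
  have h3 : S'.reverse ++ [b] = S' ++ [b] := by
    simpa using h2
  simpa using List.append_cancel_right h3

/-- Workhorse: if `Q ++ [e]` is a prefix of the palindrome `W = Pal w0`, and every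
palindromic prefix `Pal v` longer than `Q` followed by `e` in `W` is as long as `W`
itself, then the closure of `W ++ [e]` is `W ++ [e] ++ W.drop (|Q|+1)`. -/
theorem closure_general {w0 Q : List A} {e : A}
    (hQpal : Q.reverse = Q)
    (hQpre : Q ++ [e] <+: Pal w0)
    (hmax : ∀ v, v <+: w0 → Q.length < (Pal v).length → Pal v ++ [e] <+: Pal w0 →
      (Pal w0).length ≤ (Pal v).length) :
    Pal (w0 ++ [e]) = Pal w0 ++ [e] ++ (Pal w0).drop (Q.length + 1) := by
  set W := Pal w0 with hWdef
  have hW : W.reverse = W := Pal_palindrome w0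
  set n := W.length with hn
  set L := Q.length with hL
  have hlen : L + 1 ≤ n := by
    have := hQpre.length_le
    simpa using this
  set i : ℕ := n - L - 1 with hi
  have hdrop : W.drop i = e :: Q := by
    have := palindrome_drop_of_prefix hW hQpre
    simp only [List.length_append, List.length_singleton, List.reverse_append,
      List.reverse_singleton, List.singleton_append, hQpal] at this
    rw [hi, Nat.sub_sub]
    exact this
  have h1 : ((W ++ [e]).drop i).reverse = (W ++ [e]).drop i := by
    rw [List.drop_append_of_le_length (by omega), hdrop]
    simp [hQpal]
  have h2 : ∀ j < i, ¬(((W ++ [e]).drop j).reverse = (W ++ [e]).drop j) := by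
    intro j hj hpal
    rw [List.drop_append_of_le_length (by omega)] at hpal
    have hne : W.drop j ≠ [] := by
      intro hnil
      have := congrArg List.length hnil
      simp only [List.length_drop, List.length_nil] at this
      omega
    obtain ⟨a, t, hat⟩ := List.exists_cons_of_ne_nil hne
    rw [hat] at hpal
    obtain ⟨hea, htpal⟩ := palindrome_sandwich hpal
    subst hea
    have hlt : t.length = n - j - 1 := by
      have := congrArg List.length hat
      simp only [List.length_drop, List.length_cons] at this
      omega
    have hpref : t ++ [e] <+: W := by
      have hrev : (W.drop j).reverse = W.take (n - j) := by
        rw [List.reverse_drop, hW]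
      have : t ++ [e] = W.take (n - j) := by
        rw [← hrev, hat]
        simp [htpal]
      rw [this]
      exact List.take_prefix _ _
    have htW : t <+: W := ((t.prefix_append [e]).trans hpref)
    obtain ⟨v, hv, hPv⟩ := pal_prefix_Pal htpal htW
    have := hmax v hv (by rw [hPv]; omega) (by rw [hPv]; exact hpref)
    rw [hPv] at this
    omega
  have hcomp := palClosure_of_find (W ++ [e]) i h1 h2
  rw [Pal_append_singleton, ← hWdef, hcomp]
  rw [List.take_append_of_le_length (by omega)]
  have : (W.take i).reverse = W.drop (L + 1) := by
    rw [List.reverse_take, hW]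
    congr 1
    omega
  rw [this, List.append_assoc]

theorem factor_kPk {x y : List A} {k : A} (hnd : (x ++ k :: y).Nodup) :
    [k] ++ Pal x ++ [k] <:+: Pal ((x ++ k :: y) ++ [k]) := by
  set w0 := x ++ k :: y with hw0
  have hky : k ∉ y := by
    have h1 : (k :: y).Nodup := hnd.of_append_right
    exact (List.nodup_cons.1 h1).1
  have hQpre : Pal x ++ [k] <+: Pal w0 := Pal_next ⟨y, by simp [hw0]⟩
  have hmax : ∀ v, v <+: w0 → (Pal x).length < (Pal v).length →
      Pal v ++ [k] <+: Pal w0 → (Pal w0).length ≤ (Pal v).length := by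
    intro v hv hlen hvk
    have hxw0 : x <+: w0 := ⟨k :: y, rfl⟩
    have hxv : x <+: v := by
      rcases List.prefix_or_prefix_of_prefix hv hxw0 with h' | h'
      · exact absurd ((Pal_prefix_mono h').length_le) (by omega)
      · exact h'
    have hvx : x.length < v.length := by
      rcases lt_or_eq_of_le hxv.length_le with h' | h'
      · exact h'
      · exact absurd (congrArg (fun l => (Pal l).length)
          (List.IsPrefix.eq_of_length hxv h')) (by omega)
    rcases lt_or_eq_of_le hv.length_le with hvlt | hveq
    · exfalso
      have hd := snoc_get_prefix hv hvlt
      have hdk : w0.get ⟨v.length, hvlt⟩ = k :=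
        next_letter_unique (Pal_next hd) hvk
      obtain ⟨t, ht⟩ := hd
      rw [hdk] at ht
      have h5 : w0.drop (x.length + 1) = y := by
        rw [hw0]
        have h6 : x ++ k :: y = (x ++ [k]) ++ y := by simp
        rw [h6, List.drop_left' (by simp)]
      have h7 : w0.drop (x.length + 1) = v.drop (x.length + 1) ++ ([k] ++ t) := by
        rw [← ht, List.append_assoc, List.drop_append_of_le_length (by omega)]
      have h8 : k ∈ w0.drop (x.length + 1) := by rw [h7]; simp
      rw [h5] at h8
      exact hky h8
    · have : v = w0 := List.IsPrefix.eq_of_length hv hveq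
      rw [this]
  have hclose := closure_general (Pal_palindrome x) hQpre hmax
  have hdropW : (Pal w0).drop ((Pal w0).length - ((Pal x).length + 1)) = [k] ++ Pal x := by
    have := palindrome_drop_of_prefix (Pal_palindrome w0) hQpre
    simpa [Pal_palindrome] using this
  have hW : Pal w0 = (Pal w0).take ((Pal w0).length - ((Pal x).length + 1)) ++ ([k] ++ Pal x) := by
    conv_lhs => rw [← List.take_append_drop ((Pal w0).length - ((Pal x).length + 1)) (Pal w0)]
    rw [hdropW]
  rw [hclose]
  refine ⟨(Pal w0).take ((Pal w0).length - ((Pal x).length + 1)),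
    (Pal w0).drop ((Pal x).length + 1), ?_⟩
  calc (Pal w0).take ((Pal w0).length - ((Pal x).length + 1)) ++ ([k] ++ Pal x ++ [k]) ++
        (Pal w0).drop ((Pal x).length + 1)
      = ((Pal w0).take ((Pal w0).length - ((Pal x).length + 1)) ++ ([k] ++ Pal x)) ++
        ([k] ++ (Pal w0).drop ((Pal x).length + 1)) := by simp [List.append_assoc]
    _ = Pal w0 ++ [k] ++ (Pal w0).drop ((Pal x).length + 1) := by
        rw [← hW]; simp [List.append_assoc]

theorem factor_free_new {pref x : List A} {k e : A} (hx : x ≠ [])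
    (hpk : x ++ [k] <+: pref) (he : e ∉ pref) :
    ∃ v, v <:+: Pal (pref ++ [e]) ∧ v.length = (Pal x).length + 2 ∧
      ∀ b ∈ v, b ∈ x ∨ b = e := by
  set M := Pal pref with hMdef
  have hM : M.reverse = M := Pal_palindrome pref
  have hPM : Pal x ++ [k] <+: M := Pal_next hpk
  have hMlen : (Pal x).length + 1 ≤ M.length := by simpa using hPM.length_le
  have hxlen : 1 ≤ (Pal x).length := by
    have h1 := Pal_length_ge x
    have h2 : 1 ≤ x.length := List.length_pos_iff.2 hx
    omega
  have hMne : M ≠ [] := by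
    intro h
    rw [h] at hMlen
    simp at hMlen
  obtain ⟨a, M0, hM0⟩ : ∃ a M0, M = M0 ++ [a] :=
    ⟨M.getLast hMne, M.dropLast, (M.dropLast_append_getLast hMne).symm⟩
  have hM' : M = a :: M0.reverse := by
    conv_lhs => rw [← hM, hM0]
    simp
  have hPx : Pal x <+: M := ((Pal x).prefix_append [k]).trans hPM
  have hPxne : Pal x ≠ [] := by
    intro h
    rw [h] at hxlen
    simp at hxlen
  obtain ⟨p0, pt, hpt⟩ := List.exists_cons_of_ne_nil hPxne
  have hpa : p0 = a := by
    obtain ⟨r, hr⟩ := hPx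
    rw [hpt, hM'] at hr
    exact (List.cons.injEq _ _ _ _ ▸ hr).1
  have hax : a ∈ x := by
    apply mem_Pal (w := x)
    rw [hpt, hpa]
    exact List.mem_cons_self
  have hnew : Pal (pref ++ [e]) = M ++ [e] ++ M := Pal_new_letter he
  refine ⟨[a] ++ [e] ++ Pal x, ?_, by simp, ?_⟩
  · refine ⟨M0, M.drop (Pal x).length, ?_⟩
    have hMsplit : M = Pal x ++ M.drop (Pal x).length := by
      conv_lhs => rw [← List.take_append_drop (Pal x).length M]
      congr 1
      exact (List.prefix_iff_eq_take.1 hPx).symm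
    rw [hnew]
    calc M0 ++ ([a] ++ [e] ++ Pal x) ++ M.drop (Pal x).length
        = (M0 ++ [a]) ++ [e] ++ (Pal x ++ M.drop (Pal x).length) := by
          simp [List.append_assoc]
      _ = M ++ [e] ++ M := by rw [← hM0, ← hMsplit]
  · intro b hb
    simp only [List.append_assoc, List.mem_append, List.mem_singleton] at hb
    rcases hb with rfl | rfl | hb
    · exact Or.inl hax
    · exact Or.inr rfl
    · exact Or.inl (mem_Pal hb)

/-- A factor of a prefix of `s` is a factor of `s`. -/
theorem isFactor_of_infix {s : ℕ → A} {u p : List A}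
    (hp : IsPrefixOf p s) (hu : u <:+: p) : IsFactorOf u s := by
  obtain ⟨pre, post, hsplit⟩ := hu
  refine ⟨pre.length, ?_⟩
  have hpget : ∀ i, i < p.length → p[i]? = some (s i) := by
    intro i hi
    rw [IsPrefixOf] at hp
    rw [hp, List.getElem?_map, List.getElem?_range (by simpa using hi)]
    rfl
  apply List.ext_getElem?
  intro n
  rcases lt_or_ge n u.length with h1 | h1
  · have h3 : pre.length + n < p.length := by
      have h5 : (pre ++ u ++ post).length = p.length := by rw [hsplit]
      simp only [List.length_append] at h5
      omega
    have h4 : p[pre.length + n]? = u[n]? := by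
      rw [← hsplit, List.append_assoc, List.getElem?_append_right (by omega),
        Nat.add_sub_cancel_left, List.getElem?_append_left h1]
    rw [← h4, hpget _ h3, List.getElem?_map, List.getElem?_range h1]
    rfl
  · rw [List.getElem?_eq_none h1, List.getElem?_eq_none (by simpa using h1)]

theorem factor_free_rep {x s1 t1 : List A} {k c : A} {m : ℕ}
    (hxd : x = s1 ++ c :: t1) (hndx : x.Nodup) (hkx : k ∉ x) (hx2 : 2 ≤ x.length) :
    ∃ v, v <:+: Pal ((x ++ List.replicate m k) ++ [c]) ∧
      v.length = (Pal x).length + 2 ∧ ∀ b ∈ v, b ∈ x := by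
  set w0 := x ++ List.replicate m k with hw0
  set Q := Pal s1 with hQdef
  set P := Pal x with hPdef
  set U := Pal w0 with hUdef
  have hcx : c ∈ x := by rw [hxd]; simp
  have hsc : s1 ++ [c] <+: x := ⟨t1, by rw [hxd]; simp⟩
  have hxw0 : x <+: w0 := ⟨_, rfl⟩
  have hscw : s1 ++ [c] <+: w0 := hsc.trans hxw0
  have hQpre : Q ++ [c] <+: U := Pal_next hscw
  have hs1x : s1 <+: x := (s1.prefix_append [c]).trans hsc
  have hq2 : Q.length + 2 ≤ P.length := by
    cases t1 with
    | nil =>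
      have hxeq : x = s1 ++ [c] := by rw [hxd]
      have hcs1 : c ∉ s1 := by
        rw [hxeq] at hndx
        intro hmem
        exact (List.disjoint_of_nodup_append hndx) hmem (by simp)
      have hPeq : P = Q ++ [c] ++ Q := by
        rw [hPdef, hxeq, Pal_new_letter hcs1]
      have hs1len : 1 ≤ s1.length := by
        have := congrArg List.length hxeq
        simp at this
        omega
      have hq1 : 1 ≤ Q.length := le_trans hs1len (Pal_length_ge s1)
      rw [hPeq]
      simp
      omega
    | cons b t1' =>
      have h1 := Pal_length_lower hsc
      rw [← hPdef] at h1
      have h2 : Q.length + 1 ≤ (Pal (s1 ++ [c])).length := by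
        simpa using (Pal_prefix_snoc s1 c).length_le
      have h3 : s1.length + 1 + 1 ≤ x.length := by
        have := congrArg List.length hxd
        simp at this
        omega
      simp only [List.length_append, List.length_singleton] at h1
      omega
  have hmax : ∀ v, v <+: w0 → Q.length < (Pal v).length →
      Pal v ++ [c] <+: U → U.length ≤ (Pal v).length := by
    intro v hv hlen hvc
    have hvs1 : s1.length < v.length := by
      by_contra hle
      push_neg at hle
      have hs1w0 : s1 <+: w0 := hs1x.trans hxw0
      have := (Pal_prefix_mono (List.prefix_of_prefix_length_le hv hs1w0 hle)).length_le
      have h9 : (Pal s1).length = Q.length := rfl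
      omega
    rcases lt_or_eq_of_le hv.length_le with hvlt | hveq
    · exfalso
      have hd := snoc_get_prefix hv hvlt
      have hdc : w0.get ⟨v.length, hvlt⟩ = c := next_letter_unique (Pal_next hd) hvc
      rw [hdc] at hd
      rcases lt_or_ge v.length x.length with hvx | hvx
      · have hvcx : v ++ [c] <+: x :=
          List.prefix_of_prefix_length_le hd hxw0 (by simp; omega)
        obtain ⟨t2, ht2⟩ := hvcx
        have hscv : s1 ++ [c] <+: v :=
          List.prefix_of_prefix_length_le hscw hv (by simp; omega)
        obtain ⟨r, hr⟩ := hscv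
        have hcount : x.count c ≤ 1 := List.nodup_iff_count_le_one.1 hndx c
        rw [← ht2, ← hr] at hcount
        simp [List.count_append] at hcount
        omega
      · obtain ⟨t3, ht3⟩ := hd
        have hmem : c ∈ List.replicate m k := by
          have h7 : List.replicate m k = (w0).drop x.length := by
            rw [hw0, List.drop_left' rfl]
          rw [h7, ← ht3, List.append_assoc, List.drop_append_of_le_length hvx]
          simp
        exact absurd ((List.eq_of_mem_replicate hmem) ▸ hcx) hkx
    · rw [List.IsPrefix.eq_of_length hv hveq]
  have hclose := closure_general (Pal_palindrome s1) hQpre hmax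
  rw [← hUdef, ← hQdef] at hclose
  have hPpal : P.reverse = P := Pal_palindrome x
  have hPU : P <+: U := Pal_prefix_mono hxw0
  have hUP : U.drop (U.length - P.length) = P := by
    have := palindrome_drop_of_prefix (Pal_palindrome w0) hPU
    rwa [hPpal] at this
  have hUsplit : U = U.take (U.length - P.length) ++ P := by
    conv_lhs => rw [← List.take_append_drop (U.length - P.length) U]
    rw [hUP]
  have hUP2 : U = P ++ U.drop P.length := by
    conv_lhs => rw [← List.take_append_drop P.length U]
    congr 1
    exact (List.prefix_iff_eq_take.1 hPU).symm
  have hUdrop : U.drop (Q.length + 1) = P.drop (Q.length + 1) ++ U.drop P.length := by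
    conv_lhs => rw [hUP2]
    rw [List.drop_append_of_le_length (by omega)]
  have hPdne : P.drop (Q.length + 1) ≠ [] := by
    intro h
    have := congrArg List.length h
    simp only [List.length_drop, List.length_nil] at this
    omega
  obtain ⟨b0, rest, hb0⟩ := List.exists_cons_of_ne_nil hPdne
  refine ⟨P ++ [c] ++ [b0], ?_, by simp, ?_⟩
  · refine ⟨U.take (U.length - P.length), rest ++ U.drop P.length, ?_⟩
    have hA : U.take (U.length - P.length) ++ P = U := hUsplit.symm
    have hB : (b0 :: rest) ++ U.drop P.length = U.drop (Q.length + 1) := by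
      rw [hUdrop, hb0]
    calc U.take (U.length - P.length) ++ (P ++ [c] ++ [b0]) ++ (rest ++ U.drop P.length)
        = (U.take (U.length - P.length) ++ P) ++ [c] ++ ((b0 :: rest) ++ U.drop P.length) := by
          simp [List.append_assoc]
      _ = U ++ [c] ++ U.drop (Q.length + 1) := by rw [hA, hB]
      _ = Pal ((x ++ List.replicate m k) ++ [c]) := by rw [← hclose]
  · intro b hb
    simp only [List.append_assoc, List.mem_append, List.mem_singleton] at hb
    rcases hb with hb | hb | hb
    · exact mem_Pal hb
    · rw [hb]; exact hcx
    · rw [hb]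
      have hmem2 : b0 ∈ P.drop (Q.length + 1) := by
        rw [hb0]
        exact List.mem_cons_self
      exact mem_Pal (List.mem_of_mem_drop hmem2)

theorem range_map_wcat (F : List A) (z : ℕ → A) (n : ℕ) :
    (List.range n).map (wcat F z) = F.take n ++ (List.range (n - F.length)).map z := by
  induction n with
  | zero => simp
  | succ n ih =>
    rw [List.range_succ, List.map_append, ih]
    rcases lt_or_ge n F.length with h | h
    · have h1 : wcat F z n = F.get ⟨n, h⟩ := by rw [wcat]; simp [h]
      have h2 : F.take (n+1) = F.take n ++ [F.get ⟨n, h⟩] := by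
        rw [List.take_succ]
        congr 1
        simp [List.getElem?_eq_getElem h]
      have h3 : n + 1 - F.length = 0 := by omega
      have h4 : n - F.length = 0 := by omega
      rw [h3, h4] at *
      rw [h2]
      simp [h1]
    · have h1 : wcat F z n = z (n - F.length) := by
        rw [wcat]
        simp [Nat.not_lt.2 h]
      have h2 : F.take (n+1) = F := List.take_of_length_le (by omega)
      have h3 : F.take n = F := List.take_of_length_le h
      have h4 : n + 1 - F.length = (n - F.length) + 1 := by omega
      simp only [List.map_singleton]
      rw [h1, h2, h3, h4, List.range_succ, List.map_append]
      simp [List.append_assoc]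

theorem map_range_getElem? (f : ℕ → A) {n q : ℕ} (h : q < n) :
    ((List.range n).map f)[q]? = some (f q) := by
  rw [List.getElem?_map, List.getElem?_range h]
  rfl

theorem range_s_sub {s Δ : ℕ → A} (hepi : IsStdEpisturmian s Δ) {a : A}
    (ha : a ∈ Set.range s) : ∃ p, Δ p = a := by
  obtain ⟨n, rfl⟩ := ha
  have hp := hepi (n+1)
  rw [IsPrefixOf] at hp
  have hlen : n + 1 ≤ (Pal ((List.range (n+1)).map Δ)).length :=
    le_trans (by simp) (Pal_length_ge _)
  have h1 : (Pal ((List.range (n+1)).map Δ))[n]? = some (s n) := by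
    rw [hp]
    exact map_range_getElem? s (by omega)
  have h2 : s n ∈ Pal ((List.range (n+1)).map Δ) := by
    have := List.getElem?_eq_some_iff.1 h1
    obtain ⟨hlt, hget⟩ := this
    rw [← hget]
    exact List.getElem_mem _
  have h3 := mem_Pal h2
  simp only [List.mem_map, List.mem_range] at h3
  obtain ⟨p, _, hpd⟩ := h3
  exact ⟨p, hpd⟩

end EpiAux

/-- If `s` is a balanced standard episturmian sequence over at least 3 letters whose
directive sequence is `Δ = x·k·y·k·z` where `k` is the first repeated letter and `k`
is not the first letter of `Δ`, then `y = ε` and `z = k^ω`. -/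
theorem first_repeated_not_first_letter {A : Type*} [DecidableEq A] (s Δ : ℕ → A)
    (x y : List A) (k : A) (z : ℕ → A)
    (hbal : IsBalanced s) (hepi : IsStdEpisturmian s Δ) (h3 : ThreeLetters s)
    (hx : x ≠ []) (hk : k ≠ x.head hx) (hnd : (x ++ k :: y).Nodup)
    (hΔ : Δ = wcat (x ++ k :: y ++ [k]) z) :
    y = [] ∧ z = constW k := by
  classical
  obtain ⟨hxnd, hkynd, hdisj⟩ := List.nodup_append'.mp hnd
  have hkx : k ∉ x := fun hm => hdisj hm (by simp)
  set F := x ++ k :: y ++ [k] with hFdef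
  have hFsplit : F = (x ++ k :: y) ++ [k] := by simp [hFdef]
  have hFlen : F.length = x.length + y.length + 2 := by
    rw [hFdef]
    simp
    omega
  have hrm : ∀ n, (List.range n).map Δ = F.take n ++ (List.range (n - F.length)).map z := by
    intro n
    rw [hΔ]
    exact EpiAux.range_map_wcat F z n
  have hprefix : ∀ p : List A, p <+: F → (List.range p.length).map Δ = p := by
    intro p hp
    have h0 : p.length - F.length = 0 := by
      have := hp.length_le
      omega
    rw [hrm, h0]
    simp only [List.range_zero, List.map_nil, List.append_nil]
    exact (List.prefix_iff_eq_take.1 hp).symm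
  -- the factor u = k ++ Pal x ++ k
  have hprefF : (List.range F.length).map Δ = F := hprefix F List.prefix_rfl
  have hu : IsFactorOf ([k] ++ Pal x ++ [k]) s := by
    apply EpiAux.isFactor_of_infix (hepi F.length)
    rw [hprefF, hFsplit]
    exact EpiAux.factor_kPk hnd
  have hkPx : (Pal x).count k = 0 := List.count_eq_zero.2 (fun hm => hkx (EpiAux.mem_Pal hm))
  have hnofree : ∀ v : List A, IsFactorOf v s → v.length = (Pal x).length + 2 → k ∉ v → False := by
    intro v hvf hvl hkv
    have hb := hbal ([k] ++ Pal x ++ [k]) v hu hvf (by simp [hvl]) k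
    rw [List.count_eq_zero.2 hkv] at hb
    simp [List.count_append, hkPx] at hb
  -- basic values of Δ
  have hmapx : (List.range x.length).map Δ = x := by
    have := hprefix x (by
      rw [hFdef]
      exact (x.prefix_append (k :: y)).trans (List.prefix_append _ [k]))
    simpa using this
  have hmapxk : (List.range (x.length + 1)).map Δ = x ++ [k] := by
    have := hprefix (x ++ [k]) ⟨y ++ [k], by simp [hFdef]⟩
    simpa using this
  have hΔmem : ∀ (p : List A) (n q : ℕ), (List.range n).map Δ = p → q < n → Δ q ∈ p := by
    intro p n q hpq hq
    rw [← hpq]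
    exact List.mem_map.2 ⟨q, by simp [hq], rfl⟩
  have hΔx : Δ x.length = k := by
    have h1 := EpiAux.map_range_getElem? Δ (n := x.length + 1) (q := x.length) (by omega)
    rw [hmapxk, List.getElem?_append_right le_rfl] at h1
    simp at h1
    exact h1.symm
  -- every letter of the directive sequence lies in x ∪ {k}
  have hgood : ∀ p, Δ p ∈ x ∨ Δ p = k := by
    by_contra hbadall
    push_neg at hbadall
    obtain ⟨p, hp1, hp2⟩ := hbadall
    have hex : ∃ p, ¬(Δ p ∈ x) ∧ ¬(Δ p = k) := ⟨p, hp1, hp2⟩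
    set p0 := Nat.find hex with hp0def
    obtain ⟨hpx, hpk⟩ := Nat.find_spec hex
    rw [← hp0def] at hpx hpk
    have hp0x : x.length + 1 ≤ p0 := by
      by_contra hlt
      push_neg at hlt
      rcases lt_or_eq_of_le (Nat.lt_succ_iff.1 hlt) with h | h
      · exact hpx (hΔmem x x.length p0 hmapx h)
      · exact hpk (by rw [h]; exact hΔx)
    set pref := (List.range p0).map Δ with hprefdef
    have hepref : Δ p0 ∉ pref := by
      intro hm
      rw [hprefdef] at hm
      simp only [List.mem_map, List.mem_range] at hm
      obtain ⟨q, hq, hqe⟩ := hm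
      exact (Nat.find_min hex (by rw [← hp0def]; exact hq))
        ⟨by rw [hqe]; exact hpx, by rw [hqe]; exact hpk⟩
    have hxkpref : x ++ [k] <+: pref := by
      rw [hprefdef, ← hmapxk]
      apply List.IsPrefix.map
      rw [List.prefix_iff_eq_take, List.take_range, List.length_range]
      congr 1
      omega
    obtain ⟨v, hvinf, hvlen, hvmem⟩ := EpiAux.factor_free_new hx hxkpref hepref
    have hps : pref ++ [Δ p0] = (List.range (p0 + 1)).map Δ := by
      rw [hprefdef, List.range_succ, List.map_append]
      simp
    have hvf : IsFactorOf v s :=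
      EpiAux.isFactor_of_infix (hepi (p0 + 1)) (by rw [← hps]; exact hvinf)
    apply hnofree v hvf hvlen
    intro hkv
    rcases hvmem k hkv with h | h
    · exact hkx h
    · exact hpk h.symm
  -- y is empty
  have hy : y = [] := by
    cases y with
    | nil => rfl
    | cons b y' =>
      exfalso
      have hxkb : (List.range (x.length + 2)).map Δ = x ++ [k, b] := by
        have := hprefix (x ++ [k, b]) ⟨y' ++ [k], by simp [hFdef]⟩
        simpa using this
      have hΔb : Δ (x.length + 1) = b := by
        have h1 := EpiAux.map_range_getElem? Δ (n := x.length + 2) (q := x.length + 1) (by omega)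
        rw [hxkb, List.getElem?_append_right (by omega)] at h1
        simp at h1
        exact h1.symm
      rcases hgood (x.length + 1) with h | h
      · rw [hΔb] at h
        exact hdisj h (by simp)
      · rw [hΔb] at h
        subst h
        exact (List.nodup_cons.1 hkynd).1 (List.mem_cons_self)
  subst hy
  -- x has at least two letters
  have hsub : ∀ d ∈ Set.range s, d ∈ x ∨ d = k := by
    intro d hd
    obtain ⟨p, hp⟩ := EpiAux.range_s_sub hepi hd
    rw [← hp]
    exact hgood p
  have hx2 : 2 ≤ x.length := by
    by_contra hlt
    push_neg at hlt
    obtain ⟨a0, ha0⟩ : ∃ a0, x = [a0] := by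
      cases hxv : x with
      | nil => exact absurd hxv hx
      | cons a0 t =>
        cases t with
        | nil => exact ⟨a0, rfl⟩
        | cons b t' =>
          exfalso
          rw [hxv] at hlt
          simp at hlt
    obtain ⟨a, b, c, hab, hac, hbc, ha, hb, hc⟩ := h3
    have ka := hsub a ha
    have kb := hsub b hb
    have kc := hsub c hc
    rw [ha0] at ka kb kc
    simp only [List.mem_singleton] at ka kb kc
    rcases ka with rfl | rfl <;> rcases kb with h1 | h1 <;> rcases kc with h2 | h2 <;>
      simp_all
  -- the tail is constant
  have hzk : ∀ j, z j = k := by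
    by_contra hzc
    push_neg at hzc
    obtain ⟨j, hj⟩ := hzc
    have hexz : ∃ j, z j ≠ k := ⟨j, hj⟩
    set j0 := Nat.find hexz with hj0def
    have hc : z j0 ≠ k := Nat.find_spec hexz
    have hmin : ∀ q, q < j0 → z q = k := fun q hq => not_not.1 (Nat.find_min hexz hq)
    have hF2 : F = x ++ [k, k] := by simp [hFdef]
    have hFlen2 : F.length = x.length + 2 := by rw [hF2]; simp
    have hΔc : Δ (x.length + 2 + j0) = z j0 := by
      rw [hΔ]
      simp only [wcat]
      rw [dif_neg (by rw [hFlen2]; omega)]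
      congr 1
      rw [hFlen2]
      omega
    have hcgood : z j0 ∈ x := by
      rcases hgood (x.length + 2 + j0) with h | h
      · rwa [hΔc] at h
      · rw [hΔc] at h
        exact absurd h hc
    obtain ⟨s1, t1, hxd⟩ := List.append_of_mem hcgood
    have hpref2 : (List.range (x.length + 2 + j0 + 1)).map Δ
        = (x ++ List.replicate (j0 + 2) k) ++ [z j0] := by
      rw [hrm]
      have h5 : F.take (x.length + 2 + j0 + 1) = F := List.take_of_length_le (by omega)
      have h6 : x.length + 2 + j0 + 1 - F.length = j0 + 1 := by omega
      rw [h5, h6, hF2]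
      have h7 : (List.range (j0 + 1)).map z = List.replicate j0 k ++ [z j0] := by
        rw [List.range_succ, List.map_append]
        congr 1
        · have hmem : ∀ b ∈ (List.range j0).map z, b = k := by
            intro b hb
            simp only [List.mem_map, List.mem_range] at hb
            obtain ⟨q, hq, rfl⟩ := hb
            exact hmin q hq
          have hlen9 : ((List.range j0).map z).length = j0 := by simp
          have h10 := List.eq_replicate_length.2 hmem
          rwa [hlen9] at h10
      rw [h7]
      have h8 : ([k, k] : List A) ++ List.replicate j0 k = List.replicate (j0 + 2) k := by
        rw [List.replicate_succ, List.replicate_succ]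
        simp
      rw [← h8]
      simp [List.append_assoc]
    obtain ⟨v, hvinf, hvlen, hvmem⟩ :=
      EpiAux.factor_free_rep (k := k) (m := j0 + 2) hxd hxnd hkx hx2
    have hvf : IsFactorOf v s :=
      EpiAux.isFactor_of_infix (hepi _) (by rw [hpref2]; exact hvinf)
    exact hnofree v hvf hvlen (fun hm => hkx (hvmem k hm))
  exact ⟨rfl, funext hzk⟩
end

section
/- Let a₁,…,a_k be pairwise distinct letters of an alphabet A with k ≥ 3, let n ≥ 1, and let s be the standard episturmian sequence with directive sequence Δ = a₁^n·a₂·a₃⋯a_{k−1}·a_k^ω. Then s is balanced. -/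
section lemmas
set_option linter.unusedSectionVars false
variable {A : Type*} [DecidableEq A]

lemma palClosure_eq_of (w : List A) (j : ℕ)
    (hpal : (w.drop j).reverse = w.drop j)
    (hmin : ∀ i < j, (w.drop i).reverse ≠ w.drop i) :
    palClosure w = w ++ (w.take j).reverse := by
  have h : Nat.find (⟨w.length, by simp⟩ :
      ∃ i, (w.drop i).reverse = w.drop i) = j :=
    (Nat.find_eq_iff _).mpr ⟨hpal, hmin⟩
  rw [palClosure, h]

lemma palClosure_self (w : List A) (hw : w.reverse = w) : palClosure w = w := by
  rw [palClosure_eq_of w 0 (by simpa) (by omega)]; simp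

lemma Pal_concat (u : List A) (x : A) :
    Pal (u ++ [x]) = palClosure (Pal u ++ [x]) := by
  simp [Pal, List.foldl_concat]

lemma Pal_replicate (n : ℕ) (b : A) :
    Pal (List.replicate n b) = List.replicate n b := by
  induction n with
  | zero => rfl
  | succ n ih =>
      rw [List.replicate_succ' (n := n) (a := b), Pal_concat, ih, ← List.replicate_succ' (n := n) (a := b),
        palClosure_self]
      simp [List.reverse_replicate]

lemma palClosure_concat (q : List A) (x : A) (hx : x ∉ q) :
    palClosure (q ++ [x]) = q ++ x :: q.reverse := by
  rw [palClosure_eq_of (q ++ [x]) q.length]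
  · simp [List.take_left]
  · simp [List.drop_left]
  · intro i hi hrev
    rw [List.drop_append_of_le_length (le_of_lt hi)] at hrev
    obtain ⟨y, ys, hys⟩ := List.exists_cons_of_ne_nil
      (show q.drop i ≠ [] by simp [hi])
    rw [hys] at hrev
    simp at hrev
    exact hx (hrev.1 ▸ List.mem_of_mem_drop (hys ▸ List.mem_cons_self (a := y) (l := ys)))

def pwW {B : Type*} (q : List B) (c : B) : ℕ → List B
  | 0 => q
  | m+1 => q ++ c :: pwW q c m

lemma pwW_swap (q : List A) (c : A) : ∀ m, pwW q c m ++ c :: q = q ++ c :: pwW q c m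
  | 0 => rfl
  | m+1 => by
      show (q ++ c :: pwW q c m) ++ c :: q = q ++ c :: (q ++ c :: pwW q c m)
      rw [List.append_assoc, List.cons_append, ← List.cons_append, ← pwW_swap q c m]
      simp

lemma pwW_reverse (q : List A) (c : A) (hq : q.reverse = q) :
    ∀ m, (pwW q c m).reverse = pwW q c m
  | 0 => hq
  | m+1 => by
      show (q ++ c :: pwW q c m).reverse = q ++ c :: pwW q c m
      rw [List.reverse_append, List.reverse_cons, pwW_reverse q c hq m, hq,
        List.append_assoc, List.singleton_append, pwW_swap]

lemma drop_append_not_pal (q t : List A) (c : A) (r : List A) (hc : c ∉ q)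
    (htr : t.reverse = c :: r) (i : ℕ) (hi : i < q.length) :
    ((q ++ t).drop i).reverse ≠ (q ++ t).drop i := by
  intro hrev
  rw [List.drop_append_of_le_length (le_of_lt hi)] at hrev
  obtain ⟨y, ys, hys⟩ := List.exists_cons_of_ne_nil
    (show q.drop i ≠ [] by simp [hi])
  rw [hys, List.reverse_append, htr] at hrev
  have hcy : c = y := by simpa using congrArg (·.head?) hrev
  exact hc (hcy ▸ List.mem_of_mem_drop (hys ▸ List.mem_cons_self (a := y) (l := ys)))

lemma palClosure_pw (q : List A) (c : A) (hq : q.reverse = q) (hc : c ∉ q) :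
    ∀ m, palClosure (pwW q c m ++ [c]) = pwW q c (m+1)
  | 0 => by
      show palClosure (q ++ [c]) = q ++ c :: q
      rw [palClosure_concat q c hc, hq]
  | m+1 => by
      have hw : pwW q c (m+1) ++ [c] = q ++ (c :: (pwW q c m ++ [c])) := by
        show (q ++ c :: pwW q c m) ++ [c] = _
        simp
      rw [hw, palClosure_eq_of _ q.length]
      · rw [List.take_left, hq, ← hw]
        show (pwW q c (m+1) ++ [c]) ++ q = pwW q c (m+2)
        rw [List.append_assoc, List.singleton_append, pwW_swap]
        rfl
      · rw [List.drop_left]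
        have : (pwW q c m ++ [c]).reverse = c :: pwW q c m := by
          rw [List.reverse_append, pwW_reverse q c hq m]; rfl
        simp [this, List.reverse_cons]
      · intro i hi
        exact drop_append_not_pal q _ c (pwW q c m ++ [c]) hc
          (by simp [pwW_reverse q c hq m]) i hi


def qword {B : Type*} (a : ℕ → B) (n : ℕ) : ℕ → List B
  | 0 => List.replicate n (a 0)
  | j+1 => qword a n j ++ a (j+1) :: qword a n j

lemma qword_reverse (a : ℕ → A) (n : ℕ) :
    ∀ j, (qword a n j).reverse = qword a n j
  | 0 => List.reverse_replicate (n := n) (a := a 0)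
  | j+1 => by
      show (qword a n j ++ a (j+1) :: qword a n j).reverse = _
      rw [List.reverse_append, List.reverse_cons, qword_reverse a n j,
        List.append_assoc, List.singleton_append]
      rfl

lemma qword_mem (a : ℕ → A) (n : ℕ) :
    ∀ j, ∀ y ∈ qword a n j, ∃ r ≤ j, y = a r := by
  intro j
  induction j with
  | zero =>
      intro y hy
      exact ⟨0, le_refl 0, List.eq_of_mem_replicate hy⟩
  | succ j ih =>
      intro y hy
      rcases List.mem_append.mp hy with h | h
      · obtain ⟨r, hr, hy⟩ := ih y h; exact ⟨r, by omega, hy⟩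
      · rcases List.mem_cons.mp h with h | h
        · exact ⟨j+1, le_refl _, h⟩
        · obtain ⟨r, hr, hy⟩ := ih y h; exact ⟨r, by omega, hy⟩

lemma qword_length (a : ℕ → A) (n : ℕ) :
    ∀ j, (qword a n j).length + 1 = (n+1) * 2^j
  | 0 => by simp [qword]
  | j+1 => by
      show (qword a n j ++ a (j+1) :: qword a n j).length + 1 = _
      have := qword_length a n j
      simp only [List.length_append, List.length_cons]
      rw [pow_succ, ← mul_assoc]
      omega

open scoped Classical in
noncomputable def Gv (n m : ℕ) : ℕ := if h : ∃ j, ¬ ((n+1) * 2^j ∣ m) then Nat.find h else 0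

open scoped Classical in
lemma Gv_eq {n m g : ℕ} (h1 : ∀ j < g, (n+1)*2^j ∣ m)
    (h2 : ¬ ((n+1)*2^g ∣ m)) : Gv n m = g := by
  rw [Gv, dif_pos ⟨g, h2⟩]
  exact (Nat.find_eq_iff _).mpr ⟨h2, fun j hj hc => hc (h1 j hj)⟩

open scoped Classical in
lemma Gv_not_dvd {n m : ℕ} (hm : 0 < m) : ¬ ((n+1)*2^(Gv n m) ∣ m) := by
  have hex : ∃ j, ¬ ((n+1) * 2^j ∣ m) := by
    refine ⟨m, fun hd => ?_⟩
    have hle := Nat.le_of_dvd hm hd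
    have h1 : m < 2^m := Nat.lt_two_pow_self
    have h2 : 2^m ≤ (n+1)*2^m := Nat.le_mul_of_pos_left _ (by omega)
    omega
  rw [Gv, dif_pos hex]
  exact Nat.find_spec hex

open scoped Classical in
lemma Gv_dvd {n m j : ℕ} (hj : j < Gv n m) : (n+1)*2^j ∣ m := by
  rw [Gv] at hj
  split at hj
  · exact of_not_not (Nat.find_min ‹_› hj)
  · omega

lemma Gv_le_of_lt {n m t : ℕ} (hm : 0 < m) (h : m < (n+1)*2^t) : Gv n m ≤ t := by
  by_contra hgt
  push_neg at hgt
  have := Nat.le_of_dvd hm (Gv_dvd hgt)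
  omega

lemma Gv_ge {n m g : ℕ} (hm : 0 < m) (h1 : ∀ j < g, (n+1)*2^j ∣ m) :
    g ≤ Gv n m := by
  by_contra h
  push_neg at h
  exact Gv_not_dvd hm (h1 _ h)

lemma pow_step_dvd (n : ℕ) {j t : ℕ} (h : j ≤ t) : (n+1)*2^j ∣ (n+1)*2^t :=
  mul_dvd_mul_left _ (pow_dvd_pow 2 h)


lemma qword_get (a : ℕ → A) (n : ℕ) :
    ∀ j, ∀ i, ∀ hi : i < (qword a n j).length,
      (qword a n j)[i] = a (Gv n (i+1)) := by
  intro j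
  induction j with
  | zero =>
      intro i hi
      simp only [qword, List.length_replicate] at hi ⊢
      rw [List.getElem_replicate]
      congr 1
      refine (Gv_eq (by omega) ?_).symm
      rw [pow_zero, mul_one]
      intro hd
      have := Nat.le_of_dvd (by omega) hd
      omega
  | succ j ih =>
      intro i hi
      have hlen := qword_length a n j
      have hP : 0 < (n+1)*2^j := by positivity
      simp only [qword, List.length_append, List.length_cons] at hi ⊢
      rcases lt_trichotomy i (qword a n j).length with h | h | h
      · rw [List.getElem_append_left h]
        exact ih i h
      · subst h
        rw [List.getElem_append_right (le_refl _)]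
        simp only [Nat.sub_self, List.getElem_cons_zero]
        congr 1
        refine (Gv_eq (fun j' hj' => ?_) ?_).symm
        · rw [show (qword a n j).length + 1 = (n+1)*2^j from hlen]
          exact pow_step_dvd n (by omega)
        · rw [show (qword a n j).length + 1 = (n+1)*2^j from hlen]
          intro hd
          have hlt : (n+1)*2^j < (n+1)*2^(j+1) := by
            rw [pow_succ, ← mul_assoc]
            omega
          have := Nat.le_of_dvd hP hd
          omega
      · rw [List.getElem_append_right (le_of_lt h)]
        have hidx : i - (qword a n j).length = (i - (qword a n j).length - 1) + 1 := by
          omega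
        set i' := i - (qword a n j).length - 1 with hi'def
        simp only [hidx, List.getElem_cons_succ]
        have hi'lt : i' < (qword a n j).length := by omega
        rw [ih i' hi'lt]
        congr 1
        have hsum : i + 1 = (n+1)*2^j + (i'+1) := by omega
        have hgle : Gv n (i'+1) ≤ j := Gv_le_of_lt (by omega) (by omega)
        refine (Gv_eq (fun j' hj' => ?_) ?_).symm
        · rw [hsum]
          exact Nat.dvd_add (pow_step_dvd n (by omega)) (Gv_dvd hj')
        · rw [hsum]
          intro hd
          exact Gv_not_dvd (show 0 < i'+1 by omega)
            ((Nat.dvd_add_right (pow_step_dvd n hgle)).mp hd)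

lemma pwW_length_ge {B : Type*} (q : List B) (c : B) :
    ∀ m, m ≤ (pwW q c m).length
  | 0 => Nat.zero_le _
  | m+1 => by
      show m + 1 ≤ (q ++ c :: pwW q c m).length
      have := pwW_length_ge q c m
      simp only [List.length_append, List.length_cons]
      omega

lemma pw_get' (a : ℕ → A) (n k : ℕ) (hk : 3 ≤ k) (q : List A) (c : A)
    (hlen : q.length + 1 = (n+1) * 2^(k-2))
    (hget : ∀ i, ∀ hi : i < q.length, q[i] = a (Gv n (i+1)))
    (hc : c = a (k-1)) :
    ∀ m, ∀ i, ∀ hi : i < (pwW q c m).length,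
      (pwW q c m)[i] = a (min (Gv n (i+1)) (k-1)) := by
  have hmin : ∀ i, i < q.length → min (Gv n (i+1)) (k-1) = Gv n (i+1) := by
    intro i hi
    have : Gv n (i+1) ≤ k-2 := Gv_le_of_lt (by omega) (by omega)
    omega
  intro m
  induction m with
  | zero =>
      intro i hi
      simp only [pwW] at hi ⊢
      rw [hget i hi, hmin i hi]
  | succ m ih =>
      intro i hi
      simp only [pwW, List.length_append, List.length_cons] at hi ⊢
      rcases lt_trichotomy i q.length with h | h | h
      · rw [List.getElem_append_left h, hget i h, hmin i h]
      · subst h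
        rw [List.getElem_append_right (le_refl _)]
        simp only [Nat.sub_self, List.getElem_cons_zero]
        have hge : k - 1 ≤ Gv n (q.length + 1) := by
          refine Gv_ge (by omega) (fun j' hj' => ?_)
          rw [show q.length + 1 = (n+1)*2^(k-2) from hlen]
          exact pow_step_dvd n (by omega)
        rw [hc]
        congr 1
        omega
      · rw [List.getElem_append_right (le_of_lt h)]
        have hidx : i - q.length = (i - q.length - 1) + 1 := by omega
        set i' := i - q.length - 1 with hi'def
        simp only [hidx, List.getElem_cons_succ]
        have hi'lt : i' < (pwW q c m).length := by omega
        rw [ih i' hi'lt]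
        congr 1
        have hsum : i + 1 = (n+1)*2^(k-2) + (i'+1) := by omega
        by_cases hcase : Gv n (i'+1) ≤ k-2
        · have heq : Gv n (i+1) = Gv n (i'+1) := by
            refine Gv_eq (fun j' hj' => ?_) ?_
            · rw [hsum]
              exact Nat.dvd_add (pow_step_dvd n (by omega)) (Gv_dvd hj')
            · rw [hsum]
              intro hd
              exact Gv_not_dvd (show 0 < i'+1 by omega)
                ((Nat.dvd_add_right (pow_step_dvd n hcase)).mp hd)
          rw [heq]
        · push_neg at hcase
          have h1 : k - 1 ≤ Gv n (i+1) := by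
            refine Gv_ge (by omega) (fun j' hj' => ?_)
            rw [hsum]
            exact Nat.dvd_add (pow_step_dvd n (by omega)) (Gv_dvd (by omega))
          omega


lemma Pal_dir (a : ℕ → A) (n k : ℕ) (hinj : Set.InjOn a (Set.Iio k)) :
    ∀ j, j < k →
      Pal (List.replicate n (a 0) ++ (List.range' 1 j).map a) = qword a n j := by
  intro j
  induction j with
  | zero =>
      intro _
      simpa [qword] using Pal_replicate n (a 0)
  | succ j ih =>
      intro hj
      have hnotmem : a (1 + j) ∉ qword a n j := by
        intro hmem
        obtain ⟨r, hr, heq⟩ := qword_mem a n j _ hmem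
        have : 1 + j = r := hinj (by simp; omega) (by simp; omega) heq
        omega
      rw [List.range'_concat, List.map_append, ← List.append_assoc]
      simp only [one_mul, List.map_cons, List.map_nil]
      rw [Pal_concat, ih (by omega), palClosure_concat _ _ hnotmem, qword_reverse]
      show qword a n j ++ a (1 + j) :: qword a n j = _
      rw [Nat.add_comm 1 j]
      rfl

lemma Pal_pw (a : ℕ → A) (n k : ℕ) (hk : 3 ≤ k) (hinj : Set.InjOn a (Set.Iio k)) :
    ∀ m, Pal ((List.replicate n (a 0) ++ (List.range' 1 (k-2)).map a)
        ++ List.replicate m (a (k-1)))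
      = pwW (qword a n (k-2)) (a (k-1)) m := by
  have hc : a (k-1) ∉ qword a n (k-2) := by
    intro hmem
    obtain ⟨r, hr, heq⟩ := qword_mem a n (k-2) _ hmem
    have : k - 1 = r := hinj (by simp; omega) (by simp; omega) heq
    omega
  have hq := qword_reverse a n (k-2)
  intro m
  induction m with
  | zero =>
      simpa [pwW] using Pal_dir a n k hinj (k-2) (by omega)
  | succ m ih =>
      rw [List.replicate_succ' (n := m) (a := a (k-1)), ← List.append_assoc, Pal_concat, ih,
        palClosure_pw _ _ hq hc]


lemma range_map_wcat {B : Type*} (u : List B) (t : ℕ → B) (m : ℕ) :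
    (List.range (u.length + m)).map (wcat u t) = u ++ (List.range m).map t := by
  refine List.ext_getElem (by simp) (fun i h1 h2 => ?_)
  simp only [List.getElem_map, List.getElem_range]
  by_cases hi : i < u.length
  · rw [List.getElem_append_left hi]
    simp [wcat, hi]
  · rw [List.getElem_append_right (le_of_not_gt hi)]
    simp [wcat, hi]

lemma s_formula (s : ℕ → A) (n k : ℕ) (a : ℕ → A) (hk : 3 ≤ k)
    (hinj : Set.InjOn a (Set.Iio k))
    (hepi : IsStdEpisturmian s
      (wcat (List.replicate n (a 0) ++ ((List.range (k - 1)).drop 1).map a)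
        (constW (a (k - 1))))) :
    ∀ p, s p = a (min (Gv n (p+1)) (k-1)) := by
  have hdrop : (List.range (k-1)).drop 1 = List.range' 1 (k-2) := by
    rw [show k - 1 = 1+(k-2) by omega, List.range_eq_range',
      ← List.range'_append (s := 0) (m := 1) (n := k-2) (step := 1)]
    simp
  intro p
  set u := List.replicate n (a 0) ++ ((List.range (k-1)).drop 1).map a with hu
  have hpre := hepi (u.length + (p+1))
  rw [IsStdEpisturmian] at hepi
  have hmap : (List.range (u.length + (p+1))).map
      (wcat u (constW (a (k-1)))) = u ++ List.replicate (p+1) (a (k-1)) := by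
    rw [range_map_wcat]
    congr 1
    show (List.range (p+1)).map (fun _ => a (k-1)) = _
    simp
  rw [IsPrefixOf, hmap] at hpre
  have hW : Pal (u ++ List.replicate (p+1) (a (k-1)))
      = pwW (qword a n (k-2)) (a (k-1)) (p+1) := by
    rw [hu, hdrop]
    exact Pal_pw a n k hk hinj (p+1)
  rw [hW] at hpre
  have hlt : p < (pwW (qword a n (k-2)) (a (k-1)) (p+1)).length :=
    lt_of_lt_of_le (by omega) (pwW_length_ge _ _ (p+1))
  have hget := List.getElem_of_eq hpre (i := p) hlt
  simp only [List.getElem_map, List.getElem_range] at hget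
  rw [← hget]
  exact pw_get' a n k hk _ _ (qword_length a n (k-2)) (qword_get a n (k-2)) rfl (p+1) p hlt


def cntW {B : Type*} [DecidableEq B] (s : ℕ → B) (x : B) (i L : ℕ) : ℕ :=
  ((List.range L).map fun j => s (i+j)).count x

lemma cntW_succ (s : ℕ → A) (x : A) (i L : ℕ) :
    cntW s x i (L+1) = cntW s x i L + if s (i+L) = x then 1 else 0 := by
  rw [cntW, cntW, List.range_succ, List.map_append, List.count_append]
  congr 1
  simp [List.count_cons]

lemma cntW_dvd (s : ℕ → A) (x : A) (M off : ℕ) (hM : 0 < M)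
    (hx : ∀ p, s p = x ↔ M ∣ (p + 1 + off)) :
    ∀ i L, cntW s x i L = (i + L + off)/M - (i + off)/M := by
  intro i L
  induction L with
  | zero =>
      simp [cntW]
  | succ L ih =>
      rw [cntW_succ, ih]
      have hmono : (i + off)/M ≤ (i + L + off)/M := Nat.div_le_div_right (by omega)
      have hsucc : (i + (L+1) + off)/M
          = (i + L + off)/M + if M ∣ (i + L + off + 1) then 1 else 0 := by
        rw [show i + (L+1) + off = (i + L + off) + 1 by omega, Nat.succ_div]
      rw [hsucc]
      have hiff : s (i+L) = x ↔ M ∣ (i+L+off+1) := by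
        rw [hx (i+L), show i+L+1+off = i+L+off+1 from by omega]
      by_cases hd : M ∣ (i+L+off+1)
      · rw [if_pos hd, if_pos (hiff.mpr hd)]
        omega
      · rw [if_neg hd, if_neg (fun h => hd (hiff.mp h))]
        omega

lemma cntW_not_dvd (s : ℕ → A) (x : A) (M : ℕ) (hM : 0 < M)
    (hx : ∀ p, s p = x ↔ ¬ M ∣ (p + 1)) :
    ∀ i L, cntW s x i L + ((i + L)/M - i/M) = L := by
  intro i L
  induction L with
  | zero =>
      simp [cntW]
  | succ L ih =>
      rw [cntW_succ]
      have hmono : i/M ≤ (i + L)/M := Nat.div_le_div_right (by omega)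
      have hsucc : (i + (L+1))/M
          = (i + L)/M + if M ∣ (i + L + 1) then 1 else 0 := by
        rw [show i + (L+1) = (i + L) + 1 by omega, Nat.succ_div]
      rw [hsucc]
      have hiff : s (i+L) = x ↔ ¬ M ∣ (i+L+1) := hx (i+L)
      by_cases hd : M ∣ (i+L+1)
      · rw [if_neg (fun h => (hiff.mp h) hd), if_pos hd]
        omega
      · rw [if_pos (hiff.mpr hd), if_neg hd]
        omega

lemma div_balance (M : ℕ) (hM : 0 < M) (x y L : ℕ) :
    (x + L)/M - x/M ≤ ((y + L)/M - y/M) + 1 := by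
  have h1 : (x + L)/M ≤ x/M + L/M + 1 := by
    rw [Nat.add_div hM]
    split <;> omega
  have h2 : y/M + L/M ≤ (y + L)/M := by
    rw [Nat.le_div_iff_mul_le hM, add_mul]
    have e1 := Nat.div_mul_le_self y M
    have e2 := Nat.div_mul_le_self L M
    omega
  have h3 : x/M ≤ (x + L)/M := Nat.div_le_div_right (by omega)
  have h4 : y/M ≤ (y + L)/M := Nat.div_le_div_right (by omega)
  omega

lemma dvd_odd_iff (M m : ℕ) (hM : 0 < M) :
    (M ∣ m ∧ ¬ (2*M ∣ m)) ↔ 2*M ∣ (m + M) := by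
  constructor
  · rintro ⟨⟨t, rfl⟩, h2⟩
    have ht : ¬ (2 ∣ t) := by
      rintro ⟨w, rfl⟩
      exact h2 ⟨w, by ring⟩
    obtain ⟨w, rfl⟩ : ∃ w, t = 2*w+1 := ⟨t/2, by omega⟩
    exact ⟨w+1, by ring⟩
  · rintro ⟨w, hw⟩
    rcases w with _ | v
    · simp at hw
      omega
    · have hexp : 2*M*(v+1) = 2*M*v + 2*M := by ring
      rw [hexp] at hw
      have hm : m = 2*M*v + M := by linarith
      constructor
      · exact ⟨2*v+1, by rw [hm]; ring⟩
      · rintro ⟨w', hw'⟩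
        rw [hm] at hw'
        rcases le_or_gt w' v with h | h
        · have h5 : 2*M*w' ≤ 2*M*v := Nat.mul_le_mul_left _ h
          linarith
        · have h5 : 2*M*(v+1) ≤ 2*M*w' := Nat.mul_le_mul_left _ h
          rw [hexp] at h5
          linarith

end lemmas

/-- A standard episturmian sequence with directive sequence
`a₁^n·a₂⋯a_{k−1}·a_k^ω` (`n ≥ 1`, `k ≥ 3`, pairwise distinct letters, indexed
from 0 here) is balanced. -/
theorem family_a_balanced {A : Type*} [DecidableEq A] (s : ℕ → A)
    (n k : ℕ) (a : ℕ → A)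
    (hn : 1 ≤ n) (hk : 3 ≤ k) (hinj : Set.InjOn a (Set.Iio k))
    (hepi : IsStdEpisturmian s
      (wcat (List.replicate n (a 0) ++ ((List.range (k - 1)).drop 1).map a)
        (constW (a (k - 1))))) :
    IsBalanced s := by
  intro u v hfu hfv hlen x
  obtain ⟨iu, hu⟩ := hfu
  obtain ⟨iv, hv⟩ := hfv
  have hs := s_formula s n k a hk hinj hepi
  have h1 : u.count x = cntW s x iu u.length := by
    conv_lhs => rw [hu]
    rfl
  have h2 : v.count x = cntW s x iv u.length := by
    conv_lhs => rw [hv]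
    rw [hlen]
    rfl
  rcases em (∃ j, j < k ∧ x = a j) with ⟨j, hjk, rfl⟩ | hex
  · rcases Nat.eq_zero_or_pos j with hj0 | hjpos
    · -- the letter a 0
      subst hj0
      have hx : ∀ p, s p = a 0 ↔ ¬ ((n+1) ∣ (p+1)) := by
        intro p
        rw [hs p]
        constructor
        · intro h
          have hm : min (Gv n (p+1)) (k-1) = 0 :=
            hinj (Set.mem_Iio.mpr (by omega)) (Set.mem_Iio.mpr (by omega)) h
          intro hd
          have hne := Gv_not_dvd (n := n) (m := p+1) (by omega)
          have hGv : Gv n (p+1) = 0 := by omega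
          rw [hGv, pow_zero, mul_one] at hne
          exact hne hd
        · intro hnd
          have hGv : Gv n (p+1) = 0 :=
            Gv_eq (by omega) (by rw [pow_zero, mul_one]; exact hnd)
          rw [hGv]
          congr 1
      have hcu := cntW_not_dvd s (a 0) (n+1) (by omega) hx iu u.length
      have hcv := cntW_not_dvd s (a 0) (n+1) (by omega) hx iv u.length
      have hb := div_balance (n+1) (by omega) iv iu u.length
      have m1 : iu/(n+1) ≤ (iu+u.length)/(n+1) := Nat.div_le_div_right (by omega)
      have m2 : iv/(n+1) ≤ (iv+u.length)/(n+1) := Nat.div_le_div_right (by omega)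
      rw [h1, h2]
      omega
    · rcases le_or_gt j (k-2) with hj2 | hj2
      · -- a middle letter a j, 1 ≤ j ≤ k-2
        have hMpos : 0 < (n+1)*2^(j-1) := by positivity
        have h2M : (n+1)*2^j = 2*((n+1)*2^(j-1)) := by
          conv_lhs => rw [show j = (j-1)+1 from by omega]
          rw [pow_succ]
          ring
        have hx : ∀ p, s p = a j ↔
            (2*((n+1)*2^(j-1))) ∣ (p + 1 + (n+1)*2^(j-1)) := by
          intro p
          rw [hs p]
          constructor
          · intro h
            have hm : min (Gv n (p+1)) (k-1) = j :=
              hinj (Set.mem_Iio.mpr (by omega)) (Set.mem_Iio.mpr (by omega)) h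
            have hGv : Gv n (p+1) = j := by omega
            have hd1 : (n+1)*2^(j-1) ∣ (p+1) := Gv_dvd (by omega)
            have hd2 : ¬ ((2*((n+1)*2^(j-1))) ∣ (p+1)) := by
              rw [← h2M, ← hGv]
              exact Gv_not_dvd (by omega)
            exact (dvd_odd_iff _ (p+1) hMpos).mp ⟨hd1, hd2⟩
          · intro hd
            obtain ⟨hd1, hd2⟩ := (dvd_odd_iff _ (p+1) hMpos).mpr hd
            have hGv : Gv n (p+1) = j := by
              refine Gv_eq (fun j' hj' => ?_) ?_
              · exact dvd_trans (pow_step_dvd n (by omega)) hd1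
              · rw [h2M]
                exact hd2
            rw [hGv]
            congr 1
            omega
        have hcu := cntW_dvd s (a j) (2*((n+1)*2^(j-1))) ((n+1)*2^(j-1))
          (by omega) hx iu u.length
        have hcv := cntW_dvd s (a j) (2*((n+1)*2^(j-1))) ((n+1)*2^(j-1))
          (by omega) hx iv u.length
        rw [show iu + u.length + (n+1)*2^(j-1) = (iu + (n+1)*2^(j-1)) + u.length
          from by omega] at hcu
        rw [show iv + u.length + (n+1)*2^(j-1) = (iv + (n+1)*2^(j-1)) + u.length
          from by omega] at hcv
        have hb := div_balance (2*((n+1)*2^(j-1))) (by omega)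
          (iu + (n+1)*2^(j-1)) (iv + (n+1)*2^(j-1)) u.length
        have m1 : (iu + (n+1)*2^(j-1))/(2*((n+1)*2^(j-1)))
            ≤ (iu + (n+1)*2^(j-1) + u.length)/(2*((n+1)*2^(j-1))) :=
          Nat.div_le_div_right (by omega)
        have m2 : (iv + (n+1)*2^(j-1))/(2*((n+1)*2^(j-1)))
            ≤ (iv + (n+1)*2^(j-1) + u.length)/(2*((n+1)*2^(j-1))) :=
          Nat.div_le_div_right (by omega)
        rw [h1, h2]
        omega
      · -- the letter a (k-1)
        have hj' : j = k-1 := by omega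
        subst hj'
        have hMpos : 0 < (n+1)*2^(k-2) := by positivity
        have hx : ∀ p, s p = a (k-1) ↔ ((n+1)*2^(k-2)) ∣ (p + 1 + 0) := by
          intro p
          rw [hs p]
          constructor
          · intro h
            have hm : min (Gv n (p+1)) (k-1) = k-1 :=
              hinj (Set.mem_Iio.mpr (by omega)) (Set.mem_Iio.mpr (by omega)) h
            have hgt : k-2 < Gv n (p+1) := by omega
            have := Gv_dvd hgt
            rw [Nat.add_zero]
            exact this
          · intro hd
            rw [Nat.add_zero] at hd
            have hge : k-1 ≤ Gv n (p+1) :=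
              Gv_ge (by omega) (fun j' hj' =>
                dvd_trans (pow_step_dvd n (by omega)) hd)
            congr 1
            omega
        have hcu := cntW_dvd s (a (k-1)) ((n+1)*2^(k-2)) 0 (by omega) hx iu u.length
        have hcv := cntW_dvd s (a (k-1)) ((n+1)*2^(k-2)) 0 (by omega) hx iv u.length
        simp only [Nat.add_zero] at hcu hcv
        have hb := div_balance ((n+1)*2^(k-2)) (by omega) iu iv u.length
        have m1 : iu/((n+1)*2^(k-2)) ≤ (iu+u.length)/((n+1)*2^(k-2)) :=
          Nat.div_le_div_right (by omega)
        have m2 : iv/((n+1)*2^(k-2)) ≤ (iv+u.length)/((n+1)*2^(k-2)) :=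
          Nat.div_le_div_right (by omega)
        rw [h1, h2]
        omega
  · -- a letter not occurring in s
    have hxu : x ∉ u := by
      intro hxu
      rw [hu] at hxu
      simp only [List.mem_map, List.mem_range] at hxu
      obtain ⟨j, _, hj⟩ := hxu
      exact hex ⟨min (Gv n (iu+j+1)) (k-1), by omega, by rw [← hj, hs]⟩
    rw [List.count_eq_zero_of_not_mem hxu]
    omega
end
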